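/- arXiv:2302.09028 — 5 statements merged into one kernel-verified Lean document; each statement's English description precedes it below -/
import Mathlib

section
/- Let t ≥ 1 and 2 ≤ ω ≤ t be integers, and let G be a finite simple graph of treewidth at most t whose largest clique has at most ω vertices. Then the fractional chromatic number of G satisfies χ_f(G) ≤ t + (ω − 1)/t. -/
open MeasureTheory ENNReal

/-- `H` (a graph on vertex set `Fin n`) is a `t`-tree, witnessed by the natural ordering of
`Fin n`: the first `t` vertices form a clique, and every later vertex has a backward
neighborhood that is a clique on exactly `t` vertices. -/
def IsTTree (t n : ℕ) (H : SimpleGraph (Fin n)) : Prop :=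
  t ≤ n ∧
  (∀ i j : Fin n, (i : ℕ) < t → (j : ℕ) < t → i ≠ j → H.Adj i j) ∧
  ∀ i : Fin n, t ≤ (i : ℕ) →
    H.IsClique {j : Fin n | j < i ∧ H.Adj i j} ∧ {j : Fin n | j < i ∧ H.Adj i j}.ncard = t

/-- `G` has treewidth at most `t`, i.e. `G` is a partial `t`-tree: a subgraph of some `t`-tree. -/
def TreewidthAtMost {V : Type} (G : SimpleGraph V) (t : ℕ) : Prop :=
  ∃ (n : ℕ) (H : SimpleGraph (Fin n)) (f : V → Fin n),
    IsTTree t n H ∧ Function.Injective f ∧ ∀ u v : V, G.Adj u v → H.Adj (f u) (f v)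

/-- A fractional coloring of `G`: each vertex gets a measurable subset of `ℝ` of Lebesgue
measure `1`, with adjacent vertices receiving disjoint sets. -/
def IsFracColoring {V : Type} (G : SimpleGraph V) (φ : V → Set ℝ) : Prop :=
  (∀ v, MeasurableSet (φ v)) ∧ (∀ v, volume (φ v) = 1) ∧
  ∀ u v : V, G.Adj u v → φ u ∩ φ v = ∅

/-- The fractional chromatic number of `G`: the infimum over all fractional colorings of the
Lebesgue measure of the union of all color sets. -/
noncomputable def fracChromNum {V : Type} (G : SimpleGraph V) : ℝ≥0∞ :=
  ⨅ (φ : V → Set ℝ) (_ : IsFracColoring G φ), volume (⋃ v : V, φ v)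

/-!
Order the vertices along the `t`-tree `H` and colour them greedily by subsets of an interval `C`
of length `t + (ω - 1) / t`, keeping the invariant that the colour sets of two `H`-adjacent
vertices are disjoint if they are adjacent in `G` and overlap in measure exactly `1 / t`
otherwise. A new vertex `v` sees an `H`-clique `K` of at most `t` earlier vertices. Its colour
set consists of a piece of measure `1 / t` private to `φ u` for each non-neighbour `u ∈ K` of `v`
(it exists because `φ u` meets each of the other at most `t - 1` sets in measure `≤ 1 / t`),
plus fresh measure `(t - #R) / t` from `C` outside all the sets of `K`, where `R` is the set of
those non-neighbours. There is enough fresh room because, adding the sets of `K` one by one,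
every vertex outside a greedily grown `G`-clique `B ⊆ K` contributes at most `1 - 1 / t`, and
`#B ≤ ω - 1 + #R`: if `R = ∅`, then `B` together with `v` is a clique.
-/

open Finset

theorem Real.exists_measurableSet_subset_volume_eq {A : Set ℝ} {a b : ℝ} (hA : MeasurableSet A)
    (hAab : A ⊆ Set.Icc a b) {r : ℝ≥0∞} (hr : r ≤ volume A) :
    ∃ p ⊆ A, MeasurableSet p ∧ volume p = r := by
  set g : ℝ → ℝ≥0∞ := fun x => volume (A ∩ Set.Iic x)
  have hg : Continuous g := by
    refine continuous_of_le_add_edist 1 one_ne_top fun x y => ?_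
    have hsub : A ∩ Set.Iic x ⊆ (A ∩ Set.Iic y) ∪ Set.Ioc y x := by
      rintro z ⟨hzA, hzx⟩
      rcases le_or_gt z y with hzy | hyz
      · exact Or.inl ⟨hzA, hzy⟩
      · exact Or.inr ⟨hyz, hzx⟩
    calc g x ≤ g y + volume (Set.Ioc y x) := (measure_mono hsub).trans (measure_union_le _ _)
      _ ≤ g y + 1 * edist x y := by
        rw [one_mul, Real.volume_Ioc, edist_dist, Real.dist_eq]
        gcongr
        exact le_abs_self _
  have hga : g a = 0 :=
    measure_mono_null (fun z hz => le_antisymm hz.2 (hAab hz.1).1) Real.volume_singleton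
  have hgb : g (max a b) = volume A := by
    simp only [g]
    rw [Set.inter_eq_left.2 fun z (hz : z ∈ A) =>
      Set.mem_Iic.2 ((hAab hz).2.trans (le_max_right a b))]
  obtain ⟨x, -, hx⟩ :=
    intermediate_value_Icc (le_max_left a b) hg.continuousOn ⟨hga ▸ zero_le, hgb ▸ hr⟩
  exact ⟨A ∩ Set.Iic x, Set.inter_subset_left, hA.inter measurableSet_Iic, hx⟩

namespace SimpleGraph

variable {α : Type*} (G : SimpleGraph α)

theorem card_le_of_isClique_of_cliqueFree {n : ℕ} (hG : G.CliqueFree (n + 1)) {s : Finset α}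
    (hs : G.IsClique (s : Set α)) : #s ≤ n := by
  by_contra! h
  exact hG.mono h s ⟨hs, rfl⟩

theorem card_le_sub_one_add_card_of_isClique [DecidableEq α] {ω : ℕ} (hG : G.CliqueFree (ω + 1))
    {B K R : Finset α} (hBK : B ⊆ K) (hB : G.IsClique (B : Set α)) {v : α}
    (hR : ∀ x ∈ K, x ∉ R → G.Adj v x) : #B ≤ ω - 1 + #R := by
  rcases R.eq_empty_or_nonempty with rfl | hRne
  · have hvB : v ∉ B := fun hv => G.loopless.irrefl v (hR v (hBK hv) (notMem_empty v))
    have hvB' : G.IsClique (insert v B : Finset α) := by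
      rw [coe_insert]
      exact hB.insert fun x hx _ => hR x (hBK hx) (notMem_empty x)
    have := G.card_le_of_isClique_of_cliqueFree hG hvB'
    rw [card_insert_of_notMem hvB] at this
    omega
  · have := G.card_le_of_isClique_of_cliqueFree hG hB
    have := hRne.card_pos
    omega

end SimpleGraph

section OverlapColoring

variable {α : Type*}

def OverlapsExactly (G : SimpleGraph α) (τ : ℝ≥0∞) (φ : α → Set ℝ) (x y : α) : Prop :=
  (G.Adj x y → Disjoint (φ x) (φ y)) ∧ (¬ G.Adj x y → volume (φ x ∩ φ y) = τ)

theorem OverlapsExactly.symm {G : SimpleGraph α} {τ : ℝ≥0∞} {φ : α → Set ℝ} {x y : α}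
    (h : OverlapsExactly G τ φ x y) : OverlapsExactly G τ φ y x :=
  ⟨fun hyx => (h.1 hyx.symm).symm, fun hyx => Set.inter_comm (φ x) (φ y) ▸ h.2 (mt G.adj_symm hyx)⟩

theorem exists_isClique_volume_biUnion_add_le [DecidableEq α] (G : SimpleGraph α) {τ : ℝ≥0∞}
    {φ : α → Set ℝ} (s : Finset α) (hmeas : ∀ x ∈ s, MeasurableSet (φ x))
    (hvol : ∀ x ∈ s, volume (φ x) ≤ 1)
    (hover : ∀ x ∈ s, ∀ y ∈ s, x ≠ y → ¬ G.Adj x y → τ ≤ volume (φ x ∩ φ y)) :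
    ∃ B ⊆ s, G.IsClique (B : Set α) ∧ volume (⋃ x ∈ s, φ x) + #(s \ B) * τ ≤ #s := by
  induction s using Finset.induction_on with
  | empty => exact ⟨∅, subset_rfl, by simp, by simp⟩
  | insert a s ha ih =>
    obtain ⟨B, hBs, hB, hU⟩ := ih (fun x hx => hmeas x (mem_insert_of_mem hx))
      (fun x hx => hvol x (mem_insert_of_mem hx))
      (fun x hx y hy => hover x (mem_insert_of_mem hx) y (mem_insert_of_mem hy))
    have hcard : (#(insert a s) : ℝ≥0∞) = 1 + #s := by
      rw [card_insert_of_notMem ha, Nat.cast_succ, add_comm]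
    rw [set_biUnion_insert, hcard]
    by_cases hadj : ∀ b ∈ B, G.Adj a b
    · refine ⟨insert a B, insert_subset_insert a hBs, ?_, ?_⟩
      · rw [coe_insert]
        exact hB.insert fun b hb _ => hadj b hb
      · rw [insert_sdiff_insert, sdiff_insert_of_notMem ha]
        calc volume (φ a ∪ ⋃ x ∈ s, φ x) + #(s \ B) * τ
            ≤ volume (φ a) + (volume (⋃ x ∈ s, φ x) + #(s \ B) * τ) := by
              rw [← add_assoc]
              gcongr
              exact measure_union_le _ _
          _ ≤ 1 + #s := by gcongr; exact hvol a (mem_insert_self a s)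
    · push Not at hadj
      obtain ⟨l, hlB, hal⟩ := hadj
      have hls : l ∈ s := hBs hlB
      have hdiff : volume (φ a \ φ l) + τ ≤ 1 := by
        calc volume (φ a \ φ l) + τ ≤ volume (φ a \ φ l) + volume (φ a ∩ φ l) := by
              gcongr
              exact hover a (mem_insert_self a s) l (mem_insert_of_mem hls)
                (fun h => ha (h ▸ hls)) hal
          _ = volume (φ a) := by
              rw [add_comm, measure_inter_add_sdiff _ (hmeas l (mem_insert_of_mem hls))]
          _ ≤ 1 := hvol a (mem_insert_self a s)
      have hsub : φ a ∪ ⋃ x ∈ s, φ x ⊆ (φ a \ φ l) ∪ ⋃ x ∈ s, φ x := by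
        rintro z (hz | hz)
        · by_cases hzl : z ∈ φ l
          · exact Or.inr (Set.mem_biUnion hls hzl)
          · exact Or.inl ⟨hz, hzl⟩
        · exact Or.inr hz
      refine ⟨B, hBs.trans (subset_insert a s), hB, ?_⟩
      rw [insert_sdiff_of_notMem _ (fun h => ha (hBs h)), card_insert_of_notMem (by simp [ha])]
      calc volume (φ a ∪ ⋃ x ∈ s, φ x) + ((#(s \ B) + 1 : ℕ) : ℝ≥0∞) * τ
          ≤ volume (φ a \ φ l) + volume (⋃ x ∈ s, φ x) + (#(s \ B) + 1) * τ := by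
            push_cast
            gcongr
            exact (measure_mono hsub).trans (measure_union_le _ _)
        _ = (volume (φ a \ φ l) + τ) + (volume (⋃ x ∈ s, φ x) + #(s \ B) * τ) := by ring
        _ ≤ 1 + #s := by gcongr

theorem le_volume_diff_biUnion {τ : ℝ≥0∞} {φ : α → Set ℝ} {u : α} {s : Finset α}
    (hu : volume (φ u) = 1) (hover : ∀ x ∈ s, volume (φ u ∩ φ x) ≤ τ) (hs : (#s + 1) * τ ≤ 1) :
    τ ≤ volume (φ u \ ⋃ x ∈ s, φ x) := by
  have hfin : (#s : ℝ≥0∞) * τ ≠ ∞ :=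
    ne_top_of_le_ne_top one_ne_top ((mul_le_mul_left (le_add_of_nonneg_right zero_le) τ).trans hs)
  refine ENNReal.le_of_add_le_add_right hfin ?_
  calc τ + #s * τ = (#s + 1) * τ := by ring
    _ ≤ volume (φ u) := hu ▸ hs
    _ ≤ volume (φ u \ ⋃ x ∈ s, φ x) + volume (⋃ x ∈ s, φ u ∩ φ x) := by
        rw [← Set.inter_iUnion₂, add_comm]
        exact measure_le_inter_add_sdiff _ _ _
    _ ≤ volume (φ u \ ⋃ x ∈ s, φ x) + #s * τ := by
        gcongr
        exact (measure_biUnion_finset_le _ _).trans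
          ((sum_le_card_nsmul _ _ _ hover).trans_eq (nsmul_eq_mul _ _))

end OverlapColoring

section Assembly

variable {α : Type*} [DecidableEq α] {φ : α → Set ℝ} {K R : Finset α} {pad : Set ℝ}
  {pc : α → Set ℝ}

theorem disjoint_of_subset_diff_biUnion_erase
    (hpc : ∀ u ∈ R, pc u ⊆ φ u \ ⋃ x ∈ K.erase u, φ x) {u x : α} (hu : u ∈ R) (hx : x ∈ K)
    (hxu : x ≠ u) : Disjoint (pc u) (φ x) :=
  Set.disjoint_of_subset_left (hpc u hu)
    (Set.disjoint_sdiff_left.mono_right (Set.subset_biUnion_of_mem (mem_erase.2 ⟨hxu, hx⟩)))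

theorem union_biUnion_inter_eq_ite (hpad : Disjoint pad (⋃ x ∈ K, φ x))
    (hpc : ∀ u ∈ R, pc u ⊆ φ u \ ⋃ x ∈ K.erase u, φ x) {x : α} (hx : x ∈ K) :
    (pad ∪ ⋃ u ∈ R, pc u) ∩ φ x = if x ∈ R then pc x else ∅ := by
  have hpadx : Disjoint pad (φ x) := hpad.mono_right (Set.subset_biUnion_of_mem hx)
  rw [Set.union_inter_distrib_right, hpadx.inter_eq, Set.empty_union, Set.iUnion₂_inter]
  split_ifs with hxR
  · refine subset_antisymm (Set.iUnion₂_subset fun u hu => ?_)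
      (fun z hz => Set.mem_biUnion hxR ⟨hz, (hpc x hxR hz).1⟩)
    rcases eq_or_ne u x with rfl | hux
    · exact Set.inter_subset_left
    · exact (disjoint_of_subset_diff_biUnion_erase hpc hu hx hux.symm).inter_eq.trans_subset
        (Set.empty_subset _)
  · refine Set.subset_empty_iff.1 (Set.iUnion₂_subset fun u hu => ?_)
    exact (disjoint_of_subset_diff_biUnion_erase hpc hu hx
      fun h => hxR (h ▸ hu)).inter_eq.subset

theorem volume_union_biUnion_eq (hRK : R ⊆ K) (hpad : Disjoint pad (⋃ x ∈ K, φ x))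
    (hpc : ∀ u ∈ R, pc u ⊆ φ u \ ⋃ x ∈ K.erase u, φ x)
    (hpcm : ∀ u ∈ R, MeasurableSet (pc u)) :
    volume (pad ∪ ⋃ u ∈ R, pc u) = volume pad + ∑ u ∈ R, volume (pc u) := by
  have hdisj : (R : Set α).PairwiseDisjoint pc := fun u hu w hw huw =>
    (disjoint_of_subset_diff_biUnion_erase hpc hu (hRK hw) huw.symm).mono_right
      fun z hz => (hpc w hw hz).1
  have hpadR : Disjoint pad (⋃ u ∈ R, pc u) :=
    hpad.mono_right <| Set.iUnion₂_subset fun u hu =>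
      (hpc u hu).trans (Set.sdiff_subset.trans (Set.subset_biUnion_of_mem (hRK hu)))
  rw [measure_union hpadR (Finset.measurableSet_biUnion R hpcm),
    measure_biUnion_finset hdisj hpcm]

end Assembly

theorem ENNReal.add_natCast_mul_inv_le {U : ℝ≥0∞} {t k b r w : ℕ} (ht : t ≠ 0) (hkt : k ≤ t)
    (hb : b ≤ w + r) (hU : U + (k - b : ℕ) * (t : ℝ≥0∞)⁻¹ ≤ k) :
    U + (t - r : ℕ) * (t : ℝ≥0∞)⁻¹ ≤ t + w / t := by
  set τ := (t : ℝ≥0∞)⁻¹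
  have htτ : (t : ℝ≥0∞) * τ = 1 :=
    ENNReal.mul_inv_cancel (by exact_mod_cast ht) (natCast_ne_top t)
  have hnat : k * t + (t - r) ≤ t * t + w + (k - b) := by
    rcases hkt.eq_or_lt with rfl | hlt
    · omega
    · have := Nat.mul_le_mul_right t hlt
      rw [Nat.succ_mul] at this
      omega
  have hfin : ((k - b : ℕ) : ℝ≥0∞) * τ ≠ ∞ :=
    mul_ne_top (natCast_ne_top _) (inv_ne_top.2 (by exact_mod_cast ht))
  refine ENNReal.le_of_add_le_add_right hfin ?_
  calc U + (t - r : ℕ) * τ + (k - b : ℕ) * τ = (U + (k - b : ℕ) * τ) + (t - r : ℕ) * τ := by ring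
    _ ≤ k + (t - r : ℕ) * τ := by gcongr
    _ = ((k * t + (t - r) : ℕ) : ℝ≥0∞) * τ := by
      push_cast
      rw [add_mul, mul_assoc, htτ, mul_one]
    _ ≤ ((t * t + w + (k - b) : ℕ) : ℝ≥0∞) * τ := by gcongr
    _ = t + w / t + (k - b : ℕ) * τ := by
      push_cast
      rw [div_eq_mul_inv, add_mul, add_mul, mul_assoc, htτ, mul_one]

theorem natCast_sub_mul_inv_le_volume_diff_biUnion {α : Type*} {G : SimpleGraph α} {t ω : ℕ}
    (ht : t ≠ 0) (hG : G.CliqueFree (ω + 1)) {C : Set ℝ}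
    (hCvol : t + (ω - 1 : ℕ) / t ≤ volume C) {φ : α → Set ℝ} {K R : Finset α} (hK : #K ≤ t)
    (hmeas : ∀ x ∈ K, MeasurableSet (φ x)) (hvol : ∀ x ∈ K, volume (φ x) = 1)
    (hover : ∀ x ∈ K, ∀ y ∈ K, x ≠ y → OverlapsExactly G (t : ℝ≥0∞)⁻¹ φ x y) {v : α}
    (hR : ∀ x ∈ K, x ∉ R → G.Adj v x) :
    ((t - #R : ℕ) : ℝ≥0∞) * (t : ℝ≥0∞)⁻¹ ≤ volume (C \ ⋃ x ∈ K, φ x) := by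
  classical
  obtain ⟨B, hBK, hB, hUB⟩ := exists_isClique_volume_biUnion_add_le G K hmeas
    (fun x hx => (hvol x hx).le) fun x hx y hy hxy hnadj => ((hover x hx y hy hxy).2 hnadj).ge
  have hUfin : volume (⋃ x ∈ K, φ x) ≠ ∞ :=
    ne_top_of_le_ne_top (natCast_ne_top #K) (le_self_add.trans hUB)
  rw [card_sdiff_of_subset hBK] at hUB
  have hBR := G.card_le_sub_one_add_card_of_isClique hG hBK hB hR
  exact (ENNReal.le_sub_of_add_le_left hUfin
    ((ENNReal.add_natCast_mul_inv_le ht hK hBR hUB).trans hCvol)).trans le_measure_sdiff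

theorem inv_le_volume_diff_biUnion_erase {α : Type*} [DecidableEq α] {G : SimpleGraph α} {t : ℕ}
    {φ : α → Set ℝ} {K : Finset α} {u : α} (hu : u ∈ K) (hK : #K ≤ t)
    (hvol : volume (φ u) = 1)
    (hover : ∀ x ∈ K, x ≠ u → OverlapsExactly G (t : ℝ≥0∞)⁻¹ φ u x) :
    (t : ℝ≥0∞)⁻¹ ≤ volume (φ u \ ⋃ x ∈ K.erase u, φ x) := by
  refine le_volume_diff_biUnion hvol (fun x hx => ?_) ?_
  · obtain ⟨hxu, hxK⟩ := mem_erase.1 hx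
    by_cases hadj : G.Adj u x
    · simp [((hover x hxK hxu).1 hadj).inter_eq]
    · exact ((hover x hxK hxu).2 hadj).le
  · rw [← Nat.cast_add_one, card_erase_add_one hu]
    exact (mul_le_mul_left (by exact_mod_cast hK) _).trans (ENNReal.mul_inv_le_one _)

theorem exists_overlapsExactly_extension {α : Type*} {G : SimpleGraph α} {t ω : ℕ} (ht : 1 ≤ t)
    (hG : G.CliqueFree (ω + 1)) {C : Set ℝ} {a b : ℝ} (hC : MeasurableSet C)
    (hCab : C ⊆ Set.Icc a b) (hCvol : t + (ω - 1 : ℕ) / t ≤ volume C) {φ : α → Set ℝ}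
    {K : Finset α} (hK : #K ≤ t)
    (hφ : ∀ x ∈ K, MeasurableSet (φ x) ∧ φ x ⊆ C ∧ volume (φ x) = 1)
    (hover : ∀ x ∈ K, ∀ y ∈ K, x ≠ y → OverlapsExactly G (t : ℝ≥0∞)⁻¹ φ x y) (v : α) :
    ∃ S, MeasurableSet S ∧ S ⊆ C ∧ volume S = 1 ∧ ∀ x ∈ K,
      (G.Adj v x → Disjoint S (φ x)) ∧ (¬ G.Adj v x → volume (S ∩ φ x) = (t : ℝ≥0∞)⁻¹) := by
  classical
  set τ : ℝ≥0∞ := (t : ℝ≥0∞)⁻¹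
  have ht0 : t ≠ 0 := by omega
  have htτ : (t : ℝ≥0∞) * τ = 1 :=
    ENNReal.mul_inv_cancel (by exact_mod_cast ht0) (natCast_ne_top t)
  have hmeas : ∀ u, MeasurableSet (⋃ x ∈ K.erase u, φ x) := fun u =>
    (K.erase u).measurableSet_biUnion fun x hx => (hφ x (mem_of_mem_erase hx)).1
  set U := ⋃ x ∈ K, φ x
  have hUm : MeasurableSet U := K.measurableSet_biUnion fun x hx => (hφ x hx).1
  set R := K.filter fun x => ¬ G.Adj v x
  have hRK : R ⊆ K := filter_subset _ _
  have hfree : ((t - #R : ℕ) : ℝ≥0∞) * τ ≤ volume (C \ U) :=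
    natCast_sub_mul_inv_le_volume_diff_biUnion ht0 hG hCvol hK (fun x hx => (hφ x hx).1)
      (fun x hx => (hφ x hx).2.2) hover
      fun x hx hxR => by_contra fun h => hxR (mem_filter.2 ⟨hx, h⟩)
  obtain ⟨pad, hpadC, hpadm, hpadv⟩ :=
    Real.exists_measurableSet_subset_volume_eq (hC.diff hUm) (Set.sdiff_subset.trans hCab) hfree
  have hpriv : ∀ u ∈ R, ∃ p ⊆ φ u \ ⋃ x ∈ K.erase u, φ x, MeasurableSet p ∧ volume p = τ :=
    fun u hu => Real.exists_measurableSet_subset_volume_eq ((hφ u (hRK hu)).1.diff (hmeas u))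
      (Set.sdiff_subset.trans ((hφ u (hRK hu)).2.1.trans hCab))
      (inv_le_volume_diff_biUnion_erase (hRK hu) hK (hφ u (hRK hu)).2.2
        fun x hx hxu => hover u (hRK hu) x hx hxu.symm)
  choose! pc hpc hpcm hpcv using hpriv
  have hpad : Disjoint pad U := Set.disjoint_sdiff_left.mono_left hpadC
  refine ⟨pad ∪ ⋃ u ∈ R, pc u, hpadm.union (R.measurableSet_biUnion hpcm),
    Set.union_subset (hpadC.trans Set.sdiff_subset) (Set.iUnion₂_subset fun u hu =>
      (hpc u hu).trans (Set.sdiff_subset.trans (hφ u (hRK hu)).2.1)), ?_, fun x hx => ?_⟩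
  · rw [volume_union_biUnion_eq hRK hpad hpc hpcm, hpadv, sum_congr rfl hpcv, sum_const,
      nsmul_eq_mul, ← add_mul, ← Nat.cast_add, Nat.sub_add_cancel ((card_le_card hRK).trans hK),
      htτ]
  · rw [Set.disjoint_iff_inter_eq_empty, union_biUnion_inter_eq_ite hpad hpc hx]
    refine ⟨fun hadj => if_neg fun (h : x ∈ R) => (mem_filter.1 h).2 hadj, fun hnadj => ?_⟩
    rw [if_pos (mem_filter.2 ⟨hx, hnadj⟩)]
    exact hpcv x (mem_filter.2 ⟨hx, hnadj⟩)

theorem exists_overlapsExactly_of_isClique_neighborSet_inter_Iio {α : Type*} [LinearOrder α]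
    {G H : SimpleGraph α} {t ω : ℕ} (ht : 1 ≤ t)
    (hG : G.CliqueFree (ω + 1)) (hHclique : ∀ v, H.IsClique (H.neighborSet v ∩ Set.Iio v))
    (hHcard : ∀ v, (H.neighborSet v ∩ Set.Iio v).encard ≤ t) {C : Set ℝ} {a b : ℝ}
    (hC : MeasurableSet C) (hCab : C ⊆ Set.Icc a b) (hCvol : t + (ω - 1 : ℕ) / t ≤ volume C)
    (s : Finset α) :
    ∃ φ : α → Set ℝ, (∀ x ∈ s, MeasurableSet (φ x) ∧ φ x ⊆ C ∧ volume (φ x) = 1) ∧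
      ∀ x ∈ s, ∀ y ∈ s, H.Adj x y → OverlapsExactly G (t : ℝ≥0∞)⁻¹ φ x y := by
  classical
  induction s using Finset.induction_on_max with
  | empty => exact ⟨fun _ => ∅, by simp, by simp⟩
  | insert v s hlt ih =>
    obtain ⟨φ, hφ, hover⟩ := ih
    set K := s.filter (H.Adj v)
    have hKs : K ⊆ s := filter_subset _ _
    have hKback : (K : Set α) ⊆ H.neighborSet v ∩ Set.Iio v := fun x hx =>
      ⟨(mem_filter.1 hx).2, hlt x (mem_filter.1 hx).1⟩
    have hK : #K ≤ t := by
      have := (Set.encard_le_encard hKback).trans (hHcard v)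
      rwa [Set.encard_coe_eq_coe_finsetCard, Nat.cast_le] at this
    obtain ⟨S, hSm, hSC, hSv, hS⟩ := exists_overlapsExactly_extension ht hG hC hCab hCvol hK
      (fun x hx => hφ x (hKs hx))
      (fun x hx y hy hxy => hover x (hKs hx) y (hKs hy) (hHclique v (hKback hx) (hKback hy) hxy))
      v
    have hvs : v ∉ s := fun h => lt_irrefl v (hlt v h)
    have hφ' : ∀ x ∈ s, Function.update φ v S x = φ x := fun x hx =>
      Function.update_of_ne (ne_of_mem_of_not_mem hx hvs) S φ
    have hnew : ∀ y ∈ s, H.Adj v y →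
        OverlapsExactly G (t : ℝ≥0∞)⁻¹ (Function.update φ v S) v y := by
      intro y hy hadj
      rw [OverlapsExactly, Function.update_self, hφ' y hy]
      exact hS y (mem_filter.2 ⟨hy, hadj⟩)
    refine ⟨Function.update φ v S, fun x hx => ?_, fun x hx y hy hxy => ?_⟩
    · rcases mem_insert.1 hx with rfl | hx
      · rw [Function.update_self]
        exact ⟨hSm, hSC, hSv⟩
      · rw [hφ' x hx]
        exact hφ x hx
    · rcases mem_insert.1 hx with rfl | hxs
      · rcases mem_insert.1 hy with rfl | hys
        · exact (H.loopless.irrefl _ hxy).elim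
        · exact hnew y hys hxy
      · rcases mem_insert.1 hy with rfl | hys
        · exact (hnew x hxs hxy.symm).symm
        · rw [OverlapsExactly, hφ' x hxs, hφ' y hys]
          exact hover x hxs y hys hxy

theorem fracChromNum_le_of_isClique_neighborSet_inter_Iio {α : Type} [LinearOrder α] [Fintype α]
    {G H : SimpleGraph α} (hGH : G ≤ H) {t ω : ℕ} (ht : 1 ≤ t) (hG : G.CliqueFree (ω + 1))
    (hHclique : ∀ v, H.IsClique (H.neighborSet v ∩ Set.Iio v))
    (hHcard : ∀ v, (H.neighborSet v ∩ Set.Iio v).encard ≤ t) :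
    fracChromNum G ≤ t + (ω - 1 : ℕ) / t := by
  set c : ℝ≥0∞ := t + (ω - 1 : ℕ) / t
  have hc : c ≠ ∞ := add_ne_top.2
    ⟨natCast_ne_top t, div_ne_top (natCast_ne_top _) (Nat.cast_ne_zero.2 (by omega))⟩
  have hCvol : volume (Set.Icc 0 c.toReal) = c := by
    rw [Real.volume_Icc, sub_zero, ofReal_toReal hc]
  obtain ⟨φ, hφ, hover⟩ := exists_overlapsExactly_of_isClique_neighborSet_inter_Iio ht hG hHclique
    hHcard measurableSet_Icc subset_rfl hCvol.ge univ
  have hcol : IsFracColoring G φ :=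
    ⟨fun v => (hφ v (mem_univ v)).1, fun v => (hφ v (mem_univ v)).2.2, fun u v huv =>
      Set.disjoint_iff_inter_eq_empty.1 ((hover u (mem_univ u) v (mem_univ v) (hGH huv)).1 huv)⟩
  calc fracChromNum G ≤ volume (⋃ v, φ v) := iInf₂_le φ hcol
    _ ≤ volume (Set.Icc 0 c.toReal) :=
      measure_mono (Set.iUnion_subset fun v => (hφ v (mem_univ v)).2.1)
    _ = c := hCvol

theorem SimpleGraph.neighborSet_inter_Iio_eq {α : Type*} [LinearOrder α] (H : SimpleGraph α)
    (v : α) : H.neighborSet v ∩ Set.Iio v = {u | u < v ∧ H.Adj v u} :=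
  Set.ext fun _ => and_comm

theorem IsTTree.isClique_neighborSet_inter_Iio {t n : ℕ} {H : SimpleGraph (Fin n)}
    (hH : IsTTree t n H) (v : Fin n) : H.IsClique (H.neighborSet v ∩ Set.Iio v) := by
  rcases lt_or_ge (v : ℕ) t with hvt | htv
  · exact fun x hx y hy hxy => hH.2.1 x y (hx.2.trans hvt) (hy.2.trans hvt) hxy
  · exact H.neighborSet_inter_Iio_eq v ▸ (hH.2.2 v htv).1

theorem IsTTree.encard_neighborSet_inter_Iio_le {t n : ℕ} {H : SimpleGraph (Fin n)}
    (hH : IsTTree t n H) (v : Fin n) : (H.neighborSet v ∩ Set.Iio v).encard ≤ t := by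
  rcases lt_or_ge (v : ℕ) t with hvt | htv
  · calc (H.neighborSet v ∩ Set.Iio v).encard ≤ (Finset.Iio v : Set (Fin n)).encard := by
          rw [coe_Iio]
          exact Set.encard_le_encard Set.inter_subset_right
      _ ≤ t := by
          rw [Set.encard_coe_eq_coe_finsetCard, Fin.card_Iio]
          exact_mod_cast hvt.le
  · rw [H.neighborSet_inter_Iio_eq v, ← (Set.toFinite _).cast_ncard_eq, (hH.2.2 v htv).2]

theorem fracChromNum_le_of_hom {V W : Type} {G : SimpleGraph V} {G' : SimpleGraph W}
    (f : G →g G') : fracChromNum G ≤ fracChromNum G' :=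
  le_iInf₂ fun φ hφ =>
    (iInf₂_le (φ ∘ f) ⟨fun v => hφ.1 (f v), fun v => hφ.2.1 (f v),
      fun u v huv => hφ.2.2 (f u) (f v) (f.map_adj huv)⟩).trans
    (measure_mono (Set.iUnion_subset fun v => Set.subset_iUnion φ (f v)))

theorem frac_chrom_upper_bound_general (t ω : ℕ) (ht : 1 ≤ t) (hω2 : 2 ≤ ω)
    {V : Type} (G : SimpleGraph V)
    (htw : TreewidthAtMost G t) (hclique : G.CliqueFree (ω + 1)) :
    fracChromNum G ≤ (t : ℝ≥0∞) + ((ω - 1 : ℕ) : ℝ≥0∞) / (t : ℝ≥0∞) := by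
  obtain ⟨n, H, f, hH, hf, hGH⟩ := htw
  let e : V ↪ Fin n := ⟨f, hf⟩
  have hmap : G.map e ≤ H := by
    rintro _ _ ⟨-, u, v, huv, rfl, rfl⟩
    exact hGH u v huv
  have hfree : (G.map e).CliqueFree (ω + 1) := fun s hs => by
    obtain ⟨s', hs', -⟩ := (SimpleGraph.isNClique_map_iff (by omega)).1 hs
    exact hclique s' hs'
  calc fracChromNum G ≤ fracChromNum (G.map e) :=
        fracChromNum_le_of_hom (SimpleGraph.Embedding.map e G).toHom
    _ ≤ _ := fracChromNum_le_of_isClique_neighborSet_inter_Iio hmap ht hfree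
        hH.isClique_neighborSet_inter_Iio hH.encard_neighborSet_inter_Iio_le

/-- If `G` has treewidth at most `t ≥ 1` and its largest clique has at most
`ω` vertices (`2 ≤ ω ≤ t`), then `χ_f(G) ≤ t + (ω - 1)/t`. -/
theorem frac_chrom_upper_bound (t ω : ℕ) (ht : 1 ≤ t) (hω2 : 2 ≤ ω) (hωt : ω ≤ t)
    {V : Type} [Fintype V] (G : SimpleGraph V)
    (htw : TreewidthAtMost G t) (hclique : G.CliqueFree (ω + 1)) :
    fracChromNum G ≤ (t : ℝ≥0∞) + ((ω - 1 : ℕ) : ℝ≥0∞) / (t : ℝ≥0∞) :=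
  frac_chrom_upper_bound_general t ω ht hω2 G htw hclique
end

section
/- Let t ≥ 1 and 0 ≤ ω ≤ t be integers. Let K be a complete graph on t vertices whose edges are each colored red or blue, and suppose each vertex v of K is assigned a set γ(v) of exactly t colors such that γ(u) ∩ γ(v) = ∅ whenever u and v are joined by a blue edge, and |γ(u) ∩ γ(v)| = 1 whenever u and v are joined by a red edge. If the largest clique of K all of whose edges are blue has exactly ω vertices, then |⋃_{v ∈ V(K)} γ(v)| ≤ t² − t + ω. -/
/-- If the edges of a complete graph on `t` vertices are colored red and blue
(here `blue u v` records that the edge between the distinct vertices `u,v` is blue, and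
otherwise the edge is red), each vertex `v` gets a set `γ v` of exactly `t` colors with
disjoint sets across blue edges and exactly one common color across red edges, and the
largest blue clique has exactly `ω` vertices (`0 ≤ ω ≤ t`), then the total number of colors
used is at most `t² - t + ω`. -/
theorem total_colors_on_clique (t ω : ℕ) (ht : 1 ≤ t) (hωt : ω ≤ t)
    {V : Type} [Fintype V] (hV : Fintype.card V = t)
    (blue : V → V → Prop) (hsymm : ∀ u v, blue u v → blue v u)
    (γ : V → Finset ℕ)
    (hcard : ∀ v, (γ v).card = t)
    (hblue : ∀ u v : V, u ≠ v → blue u v → γ u ∩ γ v = ∅)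
    (hred : ∀ u v : V, u ≠ v → ¬blue u v → (γ u ∩ γ v).card = 1)
    (hω : ∃ S : Finset V, S.card = ω ∧ (S : Set V).Pairwise blue)
    (hmax : ∀ S : Finset V, (S : Set V).Pairwise blue → S.card ≤ ω) :
    (Finset.univ.biUnion γ).card ≤ t ^ 2 - t + ω := by
  classical
  -- family of finsets with pairwise disjoint color sets
  set P : Finset V → Prop := fun S => (S : Set V).Pairwise fun u v => Disjoint (γ u) (γ v)
    with hP
  have hne : (Finset.univ.filter P : Finset (Finset V)).Nonempty := by
    refine ⟨∅, ?_⟩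
    simp [hP]
  obtain ⟨S, hSmem, hSmax⟩ := Finset.exists_max_image _ Finset.card hne
  have hPS : P S := (Finset.mem_filter.mp hSmem).2
  -- S is a blue clique
  have hSblue : (S : Set V).Pairwise blue := by
    intro u hu v hv huv
    by_contra hb
    have h1 := hred u v huv hb
    have h2 : γ u ∩ γ v = ∅ :=
      Finset.disjoint_iff_inter_eq_empty.mp (hPS hu hv huv)
    simp [h2] at h1
  have hsω : S.card ≤ ω := hmax S hSblue
  set A : Finset ℕ := S.biUnion γ with hA
  -- for v outside S, γ v meets A
  have hmeet : ∀ v : V, v ∉ S → (γ v \ A).card ≤ t - 1 := by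
    intro v hv
    have hex : ∃ u ∈ S, ¬ Disjoint (γ u) (γ v) := by
      by_contra h
      push_neg at h
      have hins : P (insert v S) := by
        show ((insert v S : Finset V) : Set V).Pairwise _
        rw [Finset.coe_insert]
        refine Set.Pairwise.insert hPS ?_
        intro u hu huv
        exact ⟨(h u hu).symm, h u hu⟩
      have : (insert v S).card ≤ S.card :=
        hSmax _ (Finset.mem_filter.mpr ⟨Finset.mem_univ _, hins⟩)
      rw [Finset.card_insert_of_notMem hv] at this
      omega
    obtain ⟨u, hu, hdu⟩ := hex
    rw [Finset.not_disjoint_iff] at hdu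
    obtain ⟨x, hxu, hxv⟩ := hdu
    have hxA : x ∈ A := Finset.mem_biUnion.mpr ⟨u, hu, hxu⟩
    have hss : γ v \ A ⊂ γ v := by
      refine Finset.ssubset_iff_of_subset (Finset.sdiff_subset) |>.mpr ?_
      exact ⟨x, hxv, fun hx => (Finset.mem_sdiff.mp hx).2 hxA⟩
    have := Finset.card_lt_card hss
    rw [hcard v] at this
    omega
  -- decompose the union
  have hsub : Finset.univ.biUnion γ ⊆ A ∪ (Finset.univ \ S).biUnion fun v => γ v \ A := by
    intro x hx
    obtain ⟨v, _, hxv⟩ := Finset.mem_biUnion.mp hx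
    rw [Finset.mem_union]
    by_cases hvS : v ∈ S
    · exact Or.inl (Finset.mem_biUnion.mpr ⟨v, hvS, hxv⟩)
    · by_cases hxA : x ∈ A
      · exact Or.inl hxA
      · exact Or.inr (Finset.mem_biUnion.mpr ⟨v, by simp [hvS], Finset.mem_sdiff.mpr ⟨hxv, hxA⟩⟩)
  have hAcard : A.card ≤ S.card * t := by
    calc A.card ≤ ∑ u ∈ S, (γ u).card := Finset.card_biUnion_le
    _ = S.card * t := by simp [hcard, Finset.sum_const, mul_comm]
  have hBcard : ((Finset.univ \ S).biUnion fun v => γ v \ A).card ≤ (t - S.card) * (t - 1) := by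
    calc ((Finset.univ \ S).biUnion fun v => γ v \ A).card
        ≤ ∑ v ∈ Finset.univ \ S, (γ v \ A).card := Finset.card_biUnion_le
      _ ≤ ∑ _v ∈ Finset.univ \ S, (t - 1) := by
          apply Finset.sum_le_sum
          intro v hv
          exact hmeet v (Finset.mem_sdiff.mp hv).2
      _ = (t - S.card) * (t - 1) := by
          rw [Finset.sum_const, smul_eq_mul, Finset.card_sdiff_of_subset (Finset.subset_univ S),
            Finset.card_univ, hV]
  have hkey : (Finset.univ.biUnion γ).card ≤ S.card * t + (t - S.card) * (t - 1) := by
    calc (Finset.univ.biUnion γ).card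
        ≤ (A ∪ (Finset.univ \ S).biUnion fun v => γ v \ A).card := Finset.card_le_card hsub
      _ ≤ A.card + ((Finset.univ \ S).biUnion fun v => γ v \ A).card := Finset.card_union_le _ _
      _ ≤ S.card * t + (t - S.card) * (t - 1) := Nat.add_le_add hAcard hBcard
  have hst : S.card ≤ t := le_trans hsω hωt
  have harith : S.card * t + (t - S.card) * (t - 1) ≤ t ^ 2 - t + ω := by
    have ht2 : t ≤ t ^ 2 := Nat.le_self_pow two_ne_zero t
    zify [hst, ht, ht2]
    nlinarith [hsω]
  exact le_trans hkey harith
end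

section
/- Let t ≥ 1 be an integer and let H be a t-tree. Then every clique K in H on at most t vertices is contained in a clique K′ of H on exactly t vertices. -/
open MeasureTheory ENNReal

lemma filter_lt_card (t n : ℕ) (h : t ≤ n) :
    (Finset.univ.filter (fun x : Fin n => (x : ℕ) < t)).card = t := by
  have he : Finset.univ.filter (fun x : Fin n => (x : ℕ) < t) =
      (Finset.range t).attachFin (fun m hm => lt_of_lt_of_le (Finset.mem_range.mp hm) h) := by
    ext x
    simp [Finset.mem_attachFin]
  rw [he, Finset.card_attachFin, Finset.card_range]

lemma clique_ext_aux (t n : ℕ) (H : SimpleGraph (Fin n)) (hH : IsTTree t n H) :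
    ∀ d (K : Finset (Fin n)), H.IsClique (K : Set (Fin n)) → K.card + d = t →
      ∃ K' : Finset (Fin n), K ⊆ K' ∧ H.IsClique (K' : Set (Fin n)) ∧ K'.card = t := by
  obtain ⟨htn, hbase, hstep⟩ := hH
  intro d
  induction d with
  | zero => intro K hK hc; exact ⟨K, Finset.Subset.refl _, hK, by simpa using hc⟩
  | succ d ih =>
    intro K hK hc
    by_cases hall : ∀ x ∈ K, (x : ℕ) < t
    · refine ⟨Finset.univ.filter (fun x : Fin n => (x : ℕ) < t), ?_, ?_, filter_lt_card t n htn⟩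
      · intro x hx; simp [hall x hx]
      · intro a ha b hb hab
        simp only [Finset.coe_filter, Set.mem_setOf_eq] at ha hb
        exact hbase a b ha.2 hb.2 hab
    · push_neg at hall
      obtain ⟨m₀, hm₀K, hm₀t⟩ := hall
      have hne : K.Nonempty := ⟨m₀, hm₀K⟩
      set m := K.max' hne with hm
      have hmK : m ∈ K := K.max'_mem hne
      have hmt : t ≤ (m : ℕ) := le_trans hm₀t (K.le_max' m₀ hm₀K)
      obtain ⟨hNcl, hNcard⟩ := hstep m hmt
      set N : Set (Fin n) := {j : Fin n | j < m ∧ H.Adj m j} with hNdef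
      have hNfin : N.Finite := Set.toFinite N
      have hNfcard : hNfin.toFinset.card = t := by
        rw [← Set.ncard_eq_toFinset_card N hNfin]; exact hNcard
      have hKlt : K.card < hNfin.toFinset.card := by omega
      have hnsub : ¬ hNfin.toFinset ⊆ K := fun hsub =>
        absurd (Finset.card_le_card hsub) (by omega)
      obtain ⟨v, hvN, hvK⟩ := Finset.not_subset.mp hnsub
      rw [Set.Finite.mem_toFinset] at hvN
      have hvm : v < m := hvN.1
      have hAdj : ∀ b ∈ K, v ≠ b → H.Adj v b := by
        intro b hbK hvb
        by_cases hbm : b = m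
        · subst hbm; exact hvN.2.symm
        · have hbm' : b < m := lt_of_le_of_ne (K.le_max' b hbK) hbm
          have hbN : b ∈ N := ⟨hbm', hK hmK hbK (Ne.symm hbm)⟩
          exact hNcl hvN hbN hvb
      have hKins : H.IsClique ((insert v K : Finset (Fin n)) : Set (Fin n)) := by
        rw [Finset.coe_insert]
        apply hK.insert
        intro b hbK hvb
        exact hAdj b hbK hvb
      have hcard : (insert v K).card + d = t := by
        rw [Finset.card_insert_of_notMem hvK]; omega
      obtain ⟨K', hsub, hcl, hcardK'⟩ := ih (insert v K) hKins hcard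
      exact ⟨K', Finset.Subset.trans (Finset.subset_insert v K) hsub, hcl, hcardK'⟩

/-- In a `t`-tree (`t ≥ 1`), every clique on at most `t` vertices is contained
in a clique on exactly `t` vertices. -/
theorem clique_extension_in_ttree (t n : ℕ) (ht : 1 ≤ t)
    (H : SimpleGraph (Fin n)) (hH : IsTTree t n H)
    (K : Finset (Fin n)) (hK : H.IsClique (K : Set (Fin n))) (hKcard : K.card ≤ t) :
    ∃ K' : Finset (Fin n), K ⊆ K' ∧ H.IsClique (K' : Set (Fin n)) ∧ K'.card = t := by
  obtain ⟨K', h1, h2, h3⟩ := clique_ext_aux t n H hH (t - K.card) K hK (by omega)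
  exact ⟨K', h1, h2, h3⟩
end

section
/- Let t ≥ 1 and 2 ≤ ω ≤ t be integers, and let G be a finite simple graph of treewidth at most t whose largest clique has at most ω vertices. Then G admits a proper t-fold coloring with t² + ω − 1 colors; that is, there is an assignment γ of a set of exactly t colors from {1, …, t² + ω − 1} to each vertex of G such that γ(u) ∩ γ(v) = ∅ for every edge uv of G. -/
open MeasureTheory ENNReal

/-! Colour the vertices of the host `t`-tree `H ⊇ G` greedily in its elimination order, keeping
two invariants: `H`-adjacent colour sets share at most one colour, and the colour sets on an
`H`-clique `L` span at most `|L| (t - 1) + ω(G[L])` colours. A new vertex `v` sees an `H`-clique `K`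
of at most `t` earlier vertices. Each `b ∈ K` that is not `G`-adjacent to `v` has a colour that no
other vertex of `K` uses; `v` takes these private colours and fills up with colours unused on `K`.
The second invariant, applied to `K`, shows that `t² + ω - 1` colours leave enough room, and the
private colours are exactly what keeps the invariant alive for cliques through `v`. -/

open Finset SimpleGraph Function

namespace Finset

variable {ι : Type*} [DecidableEq ι] {K B : Finset ι}

lemma exists_mem_forall_notMem_of_card_inter_le_one {α : Type*} [DecidableEq α]
    {γ : ι → Finset α} {b : ι} (hb : b ∈ K) (hK : #K ≤ #(γ b))
    (h : ∀ w ∈ K, w ≠ b → #(γ b ∩ γ w) ≤ 1) :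
    ∃ x ∈ γ b, ∀ w ∈ K, w ≠ b → x ∉ γ w := by
  by_contra! hcover
  have hsub : γ b ⊆ (K.erase b).biUnion (fun w => γ b ∩ γ w) := fun x hx => by
    obtain ⟨w, hw, hwb, hxw⟩ := hcover x hx
    exact mem_biUnion.2 ⟨w, mem_erase.2 ⟨hwb, hw⟩, mem_inter.2 ⟨hx, hxw⟩⟩
  have hcard := (card_le_card hsub).trans <| card_biUnion_le_card_mul _ _ 1 fun w hw =>
    h w (mem_of_mem_erase hw) (ne_of_mem_erase hw)
  rw [card_erase_of_mem hb] at hcard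
  have := card_pos.2 ⟨b, hb⟩
  omega

lemma exists_palette {γ : ι → Finset ℕ} {S : Finset ℕ} {t : ℕ} (hBK : B ⊆ K) (hBt : #B ≤ t)
    (hγS : ∀ j ∈ K, γ j ⊆ S) (hroom : #(K.biUnion γ) + t ≤ #S + #B)
    (hprivate : ∀ b ∈ B, ∃ x ∈ γ b, ∀ w ∈ K, w ≠ b → x ∉ γ w) :
    ∃ P ⊆ S, #P = t ∧ (∀ j ∈ K \ B, Disjoint P (γ j)) ∧ ∀ b ∈ B, #(P ∩ γ b) = 1 := by
  choose! x hxγ hxpriv using hprivate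
  have hUS : K.biUnion γ ⊆ S := biUnion_subset.2 hγS
  have hXU : B.image x ⊆ K.biUnion γ := image_subset_iff.2 fun b hb =>
    mem_biUnion.2 ⟨b, hBK hb, hxγ b hb⟩
  have hXcard : #(B.image x) = #B := card_image_of_injOn fun b hb b' hb' hbb' => by
    by_contra hne
    exact hxpriv b hb b' (hBK hb') (Ne.symm hne) (hbb' ▸ hxγ b' hb')
  obtain ⟨F, hFfresh, hFcard⟩ : ∃ F ⊆ S \ K.biUnion γ, #F = t - #B :=
    exists_subset_card_eq (by rw [card_sdiff_of_subset hUS]; omega)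
  have hFγ : ∀ j ∈ K, Disjoint F (γ j) := fun j hj =>
    disjoint_left.2 fun y hyF hyj => (mem_sdiff.1 (hFfresh hyF)).2 (mem_biUnion.2 ⟨j, hj, hyj⟩)
  have hXF : Disjoint (B.image x) F :=
    disjoint_of_subset_left hXU (disjoint_left.2 fun y hy hyF => (mem_sdiff.1 (hFfresh hyF)).2 hy)
  refine ⟨B.image x ∪ F, union_subset (hXU.trans hUS) fun y hy => (mem_sdiff.1 (hFfresh hy)).1,
    by rw [card_union_of_disjoint hXF, hXcard, hFcard]; omega, fun j hj => ?_, fun b hb => ?_⟩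
  · obtain ⟨hjK, hjB⟩ := mem_sdiff.1 hj
    refine disjoint_union_left.2 ⟨disjoint_left.2 ?_, hFγ j hjK⟩
    simp only [mem_image]
    rintro _ ⟨b, hb, rfl⟩
    exact hxpriv b hb j hjK (ne_of_mem_of_not_mem hb hjB).symm
  · rw [card_eq_one]
    refine ⟨x b, eq_singleton_iff_unique_mem.2
      ⟨mem_inter.2 ⟨mem_union_left _ (mem_image_of_mem x hb), hxγ b hb⟩, fun y hy => ?_⟩⟩
    obtain ⟨hyP, hyb⟩ := mem_inter.1 hy
    rcases mem_union.1 hyP with hyX | hyF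
    · obtain ⟨b', hb', rfl⟩ := mem_image.1 hyX
      by_contra hne
      exact hxpriv b' hb' b (hBK hb) (fun h => hne (h ▸ rfl)) hyb
    · exact absurd hyb (disjoint_left.1 (hFγ b (hBK hb)) hyF)

end Finset

namespace SimpleGraph

variable {n : ℕ}

open Classical in
noncomputable def earlierNeighbors (H : SimpleGraph (Fin n)) (v : Fin n) : Finset (Fin n) :=
  {j | j < v ∧ H.Adj v j}

@[simp]
lemma mem_earlierNeighbors {H : SimpleGraph (Fin n)} {v j : Fin n} :
    j ∈ H.earlierNeighbors v ↔ j < v ∧ H.Adj v j := by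
  simp [earlierNeighbors]

lemma coe_earlierNeighbors (H : SimpleGraph (Fin n)) (v : Fin n) :
    (H.earlierNeighbors v : Set (Fin n)) = {j | j < v ∧ H.Adj v j} := by
  ext; simp

end SimpleGraph

namespace IsTTree

variable {n t : ℕ} {H : SimpleGraph (Fin n)}

lemma isClique_earlierNeighbors (hT : IsTTree t n H) (v : Fin n) :
    H.IsClique (H.earlierNeighbors v : Set (Fin n)) := by
  by_cases hv : t ≤ (v : ℕ)
  · rw [coe_earlierNeighbors]
    exact (hT.2.2 v hv).1
  · intro x hx y hy hxy
    simp only [mem_coe, mem_earlierNeighbors, Fin.lt_def] at hx hy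
    exact hT.2.1 x y (by omega) (by omega) hxy

lemma card_earlierNeighbors_le (hT : IsTTree t n H) (v : Fin n) :
    #(H.earlierNeighbors v) ≤ t := by
  by_cases hv : t ≤ (v : ℕ)
  · have := (hT.2.2 v hv).2
    rw [← coe_earlierNeighbors, Set.ncard_coe_finset] at this
    exact this.le
  · calc #(H.earlierNeighbors v) ≤ #(Iio v) :=
          card_le_card fun j hj => mem_Iio.2 (mem_earlierNeighbors.1 hj).1
      _ ≤ t := by rw [Fin.card_Iio]; omega

end IsTTree

/-- The last field says `|⋃_{j ∈ L} γ j| ≤ |L| (t - 1) + μ` whenever `μ ≥ ω(G[L])`, with the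
subtraction moved to the left. -/
structure IsPrefixTFoldColoring {n : ℕ} (t N : ℕ) (H G : SimpleGraph (Fin n)) (i : ℕ)
    (γ : Fin n → Finset ℕ) : Prop where
  subset_Icc : ∀ j : Fin n, ↑j < i → γ j ⊆ Icc 1 N
  card_eq : ∀ j : Fin n, ↑j < i → #(γ j) = t
  card_inter_le_one : ∀ j k : Fin n, ↑j < i → ↑k < i → H.Adj j k → #(γ j ∩ γ k) ≤ 1
  disjoint : ∀ j k : Fin n, ↑j < i → ↑k < i → G.Adj j k → Disjoint (γ j) (γ k)
  card_biUnion_add_card_le : ∀ L : Finset (Fin n), (∀ j ∈ L, ↑j < i) →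
    H.IsClique (L : Set (Fin n)) → ∀ μ : ℕ, G.CliqueFreeOn L (μ + 1) →
    #(L.biUnion γ) + #L ≤ #L * t + μ

namespace IsPrefixTFoldColoring

variable {n t N : ℕ} {H G : SimpleGraph (Fin n)} {γ : Fin n → Finset ℕ} {v : Fin n}
  {P : Finset ℕ}

lemma zero : IsPrefixTFoldColoring t N H G 0 (fun _ => ∅) where
  subset_Icc _ h := absurd h (Nat.not_lt_zero _)
  card_eq _ h := absurd h (Nat.not_lt_zero _)
  card_inter_le_one _ _ h := absurd h (Nat.not_lt_zero _)
  disjoint _ _ h := absurd h (Nat.not_lt_zero _)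
  card_biUnion_add_card_le L hL _ _ _ := by
    rw [eq_empty_of_forall_notMem fun j hj => Nat.not_lt_zero _ (hL j hj)]
    simp

lemma card_biUnion_update_add_le (hγ : IsPrefixTFoldColoring t N H G v γ) (hPt : #P = t)
    (hPnonadj : ∀ j ∈ H.earlierNeighbors v, ¬ G.Adj v j → #(P ∩ γ j) = 1)
    {L : Finset (Fin n)} (hL : ∀ j ∈ L, j ≤ v) (hLH : H.IsClique (L : Set (Fin n))) {μ : ℕ}
    (hLG : G.CliqueFreeOn L (μ + 1)) :
    #(L.biUnion (update γ v P)) + #L ≤ #L * t + μ := by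
  by_cases hvL : v ∉ L
  · have hLv : ∀ j ∈ L, j < v := fun j hj => (hL j hj).lt_of_ne (ne_of_mem_of_not_mem hj hvL)
    rw [biUnion_congr rfl fun j hj => update_of_ne (hLv j hj).ne _ _]
    exact hγ.card_biUnion_add_card_le L hLv hLH μ hLG
  push Not at hvL
  have hL'K : L.erase v ⊆ H.earlierNeighbors v := fun j hj =>
    mem_earlierNeighbors.2 ⟨(hL j (mem_of_mem_erase hj)).lt_of_ne (ne_of_mem_erase hj),
      hLH hvL (mem_of_mem_erase hj) (ne_of_mem_erase hj).symm⟩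
  have hL'v : ∀ j ∈ L.erase v, ↑j < (v : ℕ) := fun j hj => (mem_earlierNeighbors.1 (hL'K hj)).1
  have hL'H : H.IsClique (L.erase v : Set (Fin n)) := hLH.subset (coe_subset.2 (erase_subset v L))
  have hunion : L.biUnion (update γ v P) = P ∪ (L.erase v).biUnion γ := by
    conv_lhs => rw [← insert_erase hvL]
    rw [biUnion_insert, update_self,
      biUnion_congr rfl fun j hj => update_of_ne (ne_of_mem_erase hj) _ _]
  rw [hunion, ← card_erase_add_one hvL, add_one_mul]
  by_cases hB : ∃ b ∈ L.erase v, ¬ G.Adj v b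
  · -- the private colour of `b` in `P` is already counted in the union over `L \ {v}`
    obtain ⟨b, hbL, hb⟩ := hB
    have hIH := hγ.card_biUnion_add_card_le _ hL'v hL'H μ
      (CliqueFreeOn.subset G (coe_subset.2 (erase_subset v L)) hLG)
    have hmeet : 1 ≤ #(P ∩ (L.erase v).biUnion γ) := by
      rw [← hPnonadj b (hL'K hbL) hb]
      exact card_le_card (inter_subset_inter_left (subset_biUnion_of_mem γ hbL))
    have := card_union_add_card_inter P ((L.erase v).biUnion γ)
    omega
  · -- `v` is `G`-adjacent to all of `L \ {v}`, so the clique number drops there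
    push Not at hB
    obtain _ | μ := μ
    · exact absurd ((cliqueFreeOn_singleton G).1
        (CliqueFreeOn.subset G (Set.singleton_subset_iff.2 hvL) hLG)) (lt_irrefl 1)
    have hL'G : G.CliqueFreeOn (L.erase v : Set (Fin n)) (μ + 1) := by
      refine CliqueFreeOn.subset G (fun j hj => ?_) (CliqueFreeOn.of_succ G hLG hvL)
      exact ⟨mem_of_mem_erase hj, hB j hj⟩
    have hIH := hγ.card_biUnion_add_card_le _ hL'v hL'H μ hL'G
    have := card_union_le P ((L.erase v).biUnion γ)
    omega

lemma extend (hGH : G ≤ H) (hγ : IsPrefixTFoldColoring t N H G v γ) (hPN : P ⊆ Icc 1 N)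
    (hPt : #P = t) (hPadj : ∀ j ∈ H.earlierNeighbors v, G.Adj v j → Disjoint P (γ j))
    (hPnonadj : ∀ j ∈ H.earlierNeighbors v, ¬ G.Adj v j → #(P ∩ γ j) = 1) :
    IsPrefixTFoldColoring t N H G (v + 1) (update γ v P) := by
  have hold : ∀ j : Fin n, ↑j < (v + 1 : ℕ) → v ≠ j → ↑j < (v : ℕ) ∧ update γ v P j = γ j :=
    fun j hj hjv => ⟨by have := Fin.val_ne_of_ne hjv; omega, update_of_ne hjv.symm _ _⟩
  have hnew : ∀ j : Fin n, ↑j < (v + 1 : ℕ) → v ≠ j → H.Adj v j →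
      #(P ∩ γ j) ≤ 1 ∧ (G.Adj v j → Disjoint P (γ j)) := by
    intro j hj hjv hadj
    have hjK : j ∈ H.earlierNeighbors v := mem_earlierNeighbors.2 ⟨(hold j hj hjv).1, hadj⟩
    by_cases hG : G.Adj v j
    · have hdisj := hPadj j hjK hG
      rw [disjoint_iff_inter_eq_empty.1 hdisj]
      exact ⟨zero_le_one, fun _ => hdisj⟩
    · exact ⟨(hPnonadj j hjK hG).le, fun h => absurd h hG⟩
  refine ⟨fun j hj => ?_, fun j hj => ?_, fun j k hj hk hadj => ?_, fun j k hj hk hadj => ?_,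
    fun L hL hLH μ hLG => hγ.card_biUnion_update_add_le hPt hPnonadj
      (fun j hj => Fin.le_def.2 (Nat.lt_succ_iff.1 (hL j hj))) hLH hLG⟩
  · obtain rfl | hjv := eq_or_ne v j
    · simpa using hPN
    · rw [(hold j hj hjv).2]
      exact hγ.subset_Icc j (hold j hj hjv).1
  · obtain rfl | hjv := eq_or_ne v j
    · simpa using hPt
    · rw [(hold j hj hjv).2]
      exact hγ.card_eq j (hold j hj hjv).1
  · obtain rfl | hjv := eq_or_ne v j <;> obtain rfl | hkv := eq_or_ne v k
    · exact (H.irrefl hadj).elim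
    · rw [update_self, (hold k hk hkv).2]
      exact (hnew k hk hkv hadj).1
    · rw [update_self, (hold j hj hjv).2, inter_comm]
      exact (hnew j hj hjv hadj.symm).1
    · rw [(hold j hj hjv).2, (hold k hk hkv).2]
      exact hγ.card_inter_le_one j k (hold j hj hjv).1 (hold k hk hkv).1 hadj
  · obtain rfl | hjv := eq_or_ne v j <;> obtain rfl | hkv := eq_or_ne v k
    · exact (G.irrefl hadj).elim
    · rw [update_self, (hold k hk hkv).2]
      exact (hnew k hk hkv (hGH hadj)).2 hadj
    · rw [update_self, (hold j hj hjv).2]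
      exact ((hnew j hj hjv (hGH hadj.symm)).2 hadj.symm).symm
    · rw [(hold j hj hjv).2, (hold k hk hkv).2]
      exact hγ.disjoint j k (hold j hj hjv).1 (hold k hk hkv).1 hadj

end IsPrefixTFoldColoring

namespace IsTTree

variable {n t ω N : ℕ} {H G : SimpleGraph (Fin n)} {γ : Fin n → Finset ℕ} {v : Fin n}

open Classical in
lemma card_biUnion_earlierNeighbors_add_le (hT : IsTTree t n H) (hG : G.CliqueFree (ω + 1))
    (hγ : IsPrefixTFoldColoring t N H G v γ) :
    #((H.earlierNeighbors v).biUnion γ) + t ≤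
      t ^ 2 + ω - 1 + #{j ∈ H.earlierNeighbors v | ¬ G.Adj v j} := by
  set K := H.earlierNeighbors v
  have hKv : ∀ j ∈ K, ↑j < (v : ℕ) := fun j hj => (mem_earlierNeighbors.1 hj).1
  have hK := hγ.card_biUnion_add_card_le K hKv (hT.isClique_earlierNeighbors v)
  obtain ⟨ω, rfl⟩ : ∃ ω', ω = ω' + 1 :=
    Nat.exists_eq_succ_of_ne_zero fun h => (cliqueFree_one.1 (h ▸ hG)).false v
  rw [sq]
  rcases (show #K ≤ t from hT.card_earlierNeighbors_le v).lt_or_eq with hlt | heq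
  · have hU : #(K.biUnion γ) ≤ #K * t :=
      card_biUnion_le_card_mul _ _ _ fun j hj => (hγ.card_eq j (hKv j hj)).le
    have : (#K + 1) * t ≤ t * t := Nat.mul_le_mul_right t hlt
    rw [add_one_mul] at this
    omega
  rcases eq_empty_or_nonempty {j ∈ K | ¬ G.Adj v j} with hB | hB
  · -- all of `K` lies in the `G`-neighbourhood of `v`, whose clique number is at most `ω - 1`
    have hKG : G.CliqueFreeOn K (ω + 1) := by
      refine CliqueFreeOn.subset G (fun j hj => ?_)
        (CliqueFreeOn.of_succ G (CliqueFree.cliqueFreeOn G hG) (Set.mem_univ v))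
      refine ⟨Set.mem_univ j, ?_⟩
      by_contra hadj
      exact (eq_empty_iff_forall_notMem.1 hB) j (mem_filter.2 ⟨hj, hadj⟩)
    have := hK ω hKG
    rw [heq] at this
    omega
  · have := hK (ω + 1) (CliqueFree.cliqueFreeOn G hG)
    have := hB.card_pos
    rw [heq] at *
    omega

lemma exists_palette_earlierNeighbors (hT : IsTTree t n H) (hG : G.CliqueFree (ω + 1))
    (hγ : IsPrefixTFoldColoring t (t ^ 2 + ω - 1) H G v γ) :
    ∃ P ⊆ Icc 1 (t ^ 2 + ω - 1), #P = t ∧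
      (∀ j ∈ H.earlierNeighbors v, G.Adj v j → Disjoint P (γ j)) ∧
      ∀ j ∈ H.earlierNeighbors v, ¬ G.Adj v j → #(P ∩ γ j) = 1 := by
  classical
  set K := H.earlierNeighbors v
  have hKv : ∀ j ∈ K, ↑j < (v : ℕ) := fun j hj => (mem_earlierNeighbors.1 hj).1
  have hKt : #K ≤ t := hT.card_earlierNeighbors_le v
  have hprivate : ∀ b ∈ {j ∈ K | ¬ G.Adj v j}, ∃ x ∈ γ b, ∀ w ∈ K, w ≠ b → x ∉ γ w := by
    intro b hb
    have hbK := (mem_filter.1 hb).1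
    refine exists_mem_forall_notMem_of_card_inter_le_one hbK (hγ.card_eq b (hKv b hbK) ▸ hKt)
      fun w hw hwb => hγ.card_inter_le_one b w (hKv b hbK) (hKv w hw) ?_
    exact hT.isClique_earlierNeighbors v hbK hw hwb.symm
  obtain ⟨P, hPN, hPt, hPadj, hPnonadj⟩ := Finset.exists_palette (filter_subset _ K)
    ((card_le_card (filter_subset _ K)).trans hKt) (fun j hj => hγ.subset_Icc j (hKv j hj))
    (by rw [Nat.card_Icc, Nat.add_sub_cancel]; exact hT.card_biUnion_earlierNeighbors_add_le hG hγ)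
    hprivate
  exact ⟨P, hPN, hPt, fun j hj hadj => hPadj j (mem_sdiff.2 ⟨hj, fun h => (mem_filter.1 h).2 hadj⟩),
    fun j hj hadj => hPnonadj j (mem_filter.2 ⟨hj, hadj⟩)⟩

theorem exists_tFoldColoring (hT : IsTTree t n H) (hGH : G ≤ H) (hG : G.CliqueFree (ω + 1)) :
    ∃ γ : Fin n → Finset ℕ, (∀ v, γ v ⊆ Icc 1 (t ^ 2 + ω - 1)) ∧ (∀ v, #(γ v) = t) ∧
      ∀ u v, G.Adj u v → Disjoint (γ u) (γ v) := by
  have hprefix : ∀ i ≤ n, ∃ γ, IsPrefixTFoldColoring t (t ^ 2 + ω - 1) H G i γ := by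
    intro i
    induction i with
    | zero => exact fun _ => ⟨_, .zero⟩
    | succ i ih =>
      intro hi
      obtain ⟨γ, hγ⟩ := ih (by omega)
      obtain ⟨P, hPN, hPt, hPadj, hPnonadj⟩ :=
        hT.exists_palette_earlierNeighbors hG (v := ⟨i, hi⟩) hγ
      exact ⟨_, hγ.extend hGH hPN hPt hPadj hPnonadj⟩
  obtain ⟨γ, hγ⟩ := hprefix n le_rfl
  exact ⟨γ, fun v => hγ.subset_Icc v v.2, fun v => hγ.card_eq v v.2,
    fun u v => hγ.disjoint u v u.2 v.2⟩

end IsTTree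

theorem t_fold_coloring_of_partial_t_tree_general (t ω : ℕ) {V : Type} (G : SimpleGraph V)
    (htw : TreewidthAtMost G t) (hclique : G.CliqueFree (ω + 1)) :
    ∃ γ : V → Finset ℕ,
      (∀ v, γ v ⊆ Finset.Icc 1 (t ^ 2 + ω - 1)) ∧
      (∀ v, (γ v).card = t) ∧
      ∀ u v : V, G.Adj u v → γ u ∩ γ v = ∅ := by
  obtain ⟨n, H, f, hT, hf, hfH⟩ := htw
  cases isEmpty_or_nonempty V
  · exact ⟨fun _ => ∅, isEmptyElim, isEmptyElim, fun u => isEmptyElim u⟩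
  let e : V ↪ Fin n := ⟨f, hf⟩
  obtain ⟨γ, hγN, hγt, hγG⟩ := hT.exists_tFoldColoring (G := G.map e)
    ((map_le_iff_le_comap e G H).2 fun u v => hfH u v) (cliqueFree_map_iff.2 hclique)
  exact ⟨γ ∘ f, fun v => hγN (f v), fun v => hγt (f v),
    fun u v huv => disjoint_iff_inter_eq_empty.1 (hγG _ _ (map_adj_apply.2 huv))⟩

/-- If `G` has treewidth at most `t ≥ 1` and its largest clique has at most
`ω` vertices (`2 ≤ ω ≤ t`), then `G` has a proper `t`-fold coloring using the colors
`{1, …, t² + ω - 1}`. -/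
theorem t_fold_coloring_of_partial_t_tree (t ω : ℕ) (ht : 1 ≤ t) (hω2 : 2 ≤ ω) (hωt : ω ≤ t)
    {V : Type} [Fintype V] (G : SimpleGraph V)
    (htw : TreewidthAtMost G t) (hclique : G.CliqueFree (ω + 1)) :
    ∃ γ : V → Finset ℕ,
      (∀ v, γ v ⊆ Finset.Icc 1 (t ^ 2 + ω - 1)) ∧
      (∀ v, (γ v).card = t) ∧
      ∀ u v : V, G.Adj u v → γ u ∩ γ v = ∅ :=
  t_fold_coloring_of_partial_t_tree_general t ω G htw hclique
end

section
/- Let t ≥ 1 and 2 ≤ ω ≤ t be integers. Let H be a t-tree built from an initial clique K on t vertices, equipped with a red-blue edge-coloring in which every edge of K is red and H contains no blue clique on ω + 1 vertices. Then there exists an assignment γ of a set of exactly t colors from {1, …, t² + ω − 1} to each vertex of H such that γ(u) ∩ γ(v) = ∅ whenever u and v are joined by a blue edge, and |γ(u) ∩ γ(v)| = 1 whenever u and v are joined by a red edge. -/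
open MeasureTheory ENNReal

/-!
Colour the vertices in the order in which the `t`-tree is built, keeping the extra invariant that
inside every clique each colour is used at most twice. A new vertex `x` sees a clique `C` of at most
`t` coloured vertices. Colour sets in `C` meet pairwise in at most one colour, so every `u ∈ C`
has a private colour; `x` takes the private colours of its red neighbours and fills up with colours
unused on `C`. There are enough of those: by the invariant, `C` uses at most `t|C| - e(C)` colours,
where `e(C)` counts red edges, while a maximal blue clique of `C ∪ {x}` has at most `ω` vertices and
every other vertex has a red edge into it, so `C ∪ {x}` has at least `|C| + 1 - ω` red edges.
-/

open Finset

namespace Finset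

variable {α κ : Type*} [DecidableEq κ]

theorem exists_subset_card_inter_eq_one {C R : Finset α} (hRC : R ⊆ C) {γ : α → Finset κ}
    {P : Finset κ} (hCP : C.biUnion γ ⊆ P) {t : ℕ} (hR : #R ≤ t)
    (hbudget : t ≤ #R + #(P \ C.biUnion γ))
    (hpriv : ∀ u ∈ R, ∃ c ∈ γ u, ∀ v ∈ C, v ≠ u → c ∉ γ v) :
    ∃ s ⊆ P, #s = t ∧ (∀ u ∈ R, #(s ∩ γ u) = 1) ∧ (∀ u ∈ C, u ∉ R → s ∩ γ u = ∅) ∧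
      ∀ c ∈ s, #{u ∈ C | c ∈ γ u} ≤ 1 := by
  choose p hpγ hp using hpriv
  set Q := R.attach.image fun u : {x // x ∈ R} ↦ p u.1 u.2
  obtain ⟨F, hF, hFcard⟩ := exists_subset_card_eq (show t - #R ≤ #(P \ C.biUnion γ) by omega)
  have hFC : ∀ c ∈ F, ∀ u ∈ C, c ∉ γ u := fun c hc u hu hcu ↦
    (mem_sdiff.1 (hF hc)).2 (mem_biUnion.2 ⟨u, hu, hcu⟩)
  have hholder : ∀ c ∈ Q ∪ F, ∀ u ∈ C, c ∈ γ u → ∃ hu : u ∈ R, c = p u hu := by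
    intro c hc u hu hcu
    rcases mem_union.1 hc with hc | hc
    · obtain ⟨⟨v, hv⟩, -, rfl⟩ := mem_image.1 hc
      obtain rfl : u = v := by_contra fun huv ↦ hp v hv u hu huv hcu
      exact ⟨hv, rfl⟩
    · exact absurd hcu (hFC c hc u hu)
  refine ⟨Q ∪ F, union_subset ?_ (hF.trans sdiff_subset), ?_, ?_, ?_, ?_⟩
  · exact image_subset_iff.2 fun u _ ↦ hCP (mem_biUnion.2 ⟨u, hRC u.2, hpγ u.1 u.2⟩)
  · have hdisj : Disjoint Q F := disjoint_left.2 fun c hc hcF ↦ by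
      obtain ⟨⟨u, hu⟩, -, rfl⟩ := mem_image.1 hc
      exact hFC _ hcF u (hRC hu) (hpγ u hu)
    have hinj : Function.Injective fun u : {x // x ∈ R} ↦ p u.1 u.2 := fun ⟨u, hu⟩ ⟨v, hv⟩ huv ↦
      Subtype.ext <| by_contra fun h ↦ hp v hv u (hRC hu) h (by simpa [huv] using hpγ u hu)
    rw [card_union_of_disjoint hdisj, card_image_of_injective _ hinj, card_attach, hFcard]
    omega
  · intro u hu
    refine card_eq_one.2 ⟨p u hu, eq_singleton_iff_unique_mem.2 ⟨?_, fun c hc ↦ ?_⟩⟩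
    · exact mem_inter.2 ⟨mem_union_left _ (mem_image_of_mem _ (mem_attach R ⟨u, hu⟩)), hpγ u hu⟩
    · exact (hholder c (mem_inter.1 hc).1 u (hRC hu) (mem_inter.1 hc).2).2
  · intro u hu huR
    exact eq_empty_of_forall_notMem fun c hc ↦
      huR (hholder c (mem_inter.1 hc).1 u hu (mem_inter.1 hc).2).1
  · intro c hc
    refine card_le_one.2 fun u hu v hv ↦ ?_
    obtain ⟨hu, hcu⟩ := mem_filter.1 hu
    obtain ⟨hv', hcv⟩ := mem_filter.1 hv
    obtain ⟨huR, rfl⟩ := hholder c hc u hu hcu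
    exact by_contra fun h ↦ hp u huR v hv' (Ne.symm h) hcv

variable [DecidableEq α]

theorem card_biUnion_add_card_le_sum_card {C : Finset α} {γ : α → Finset κ}
    (hmult : ∀ c, #{u ∈ C | c ∈ γ u} ≤ 2) {Q : Finset (Finset α)} (hQC : Q ⊆ C.powersetCard 2)
    (hQ : ∀ e ∈ Q, ∃ c, ∀ u ∈ e, c ∈ γ u) :
    #(C.biUnion γ) + #Q ≤ ∑ u ∈ C, #(γ u) := by
  set U := C.biUnion γ
  set m : κ → ℕ := fun c ↦ #{u ∈ C | c ∈ γ u}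
  -- a pair sharing a colour `c` is the set of all holders of `c`, since `c` has at most two
  have hQ_sub : Q ⊆ {c ∈ U | 2 ≤ m c}.image fun c ↦ {u ∈ C | c ∈ γ u} := by
    intro e he
    obtain ⟨c, hc⟩ := hQ e he
    obtain ⟨heC, he2⟩ := mem_powersetCard.1 (hQC he)
    have hsub : e ⊆ {u ∈ C | c ∈ γ u} := fun u hu ↦ mem_filter.2 ⟨heC hu, hc u hu⟩
    have heq : e = {u ∈ C | c ∈ γ u} := eq_of_subset_of_card_le hsub (he2 ▸ hmult c)
    obtain ⟨u, hu⟩ := card_pos.1 (by omega : 0 < #e)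
    refine mem_image.2 ⟨c, mem_filter.2 ⟨mem_biUnion.2 ⟨u, heC hu, hc u hu⟩, ?_⟩, heq.symm⟩
    simp only [m, ← heq, he2, le_refl]
  have hdouble : ∑ u ∈ C, #(γ u) = ∑ c ∈ U, m c :=
    calc ∑ u ∈ C, #(γ u) = ∑ u ∈ C, #(U.bipartiteAbove (fun u c ↦ c ∈ γ u) u) := by
          refine sum_congr rfl fun u hu ↦ ?_
          rw [bipartiteAbove, filter_mem_eq_inter, inter_eq_right.2 (subset_biUnion_of_mem γ hu)]
      _ = ∑ c ∈ U, m c := sum_card_bipartiteAbove_eq_sum_card_bipartiteBelow _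
  have hm : ∀ c ∈ U, 1 + (if 2 ≤ m c then 1 else 0) ≤ m c := by
    intro c hc
    obtain ⟨u, hu, hcu⟩ := mem_biUnion.1 hc
    have : 0 < m c := card_pos.2 ⟨u, mem_filter.2 ⟨hu, hcu⟩⟩
    split <;> omega
  calc #U + #Q ≤ #U + #{c ∈ U | 2 ≤ m c} := by grw [card_le_card hQ_sub, card_image_le]
    _ = ∑ c ∈ U, (1 + if 2 ≤ m c then 1 else 0) := by
        rw [sum_add_distrib, sum_boole, card_eq_sum_ones]; simp
    _ ≤ ∑ c ∈ U, m c := sum_le_sum hm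
    _ = ∑ u ∈ C, #(γ u) := hdouble.symm

theorem exists_mem_forall_notMem_of_card_inter_le_one_s11 {C : Finset α} {γ : α → Finset κ} {t : ℕ}
    (hγ : ∀ u ∈ C, #(γ u) = t) (hC : #C ≤ t)
    (hinter : ∀ u ∈ C, ∀ v ∈ C, u ≠ v → #(γ u ∩ γ v) ≤ 1) {u : α} (hu : u ∈ C) :
    ∃ c ∈ γ u, ∀ v ∈ C, v ≠ u → c ∉ γ v := by
  have hshared : #(γ u ∩ (C.erase u).biUnion γ) < #(γ u) :=
    calc #(γ u ∩ (C.erase u).biUnion γ)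
        = #((C.erase u).biUnion fun v ↦ γ u ∩ γ v) := by rw [inter_biUnion]
      _ ≤ ∑ v ∈ C.erase u, #(γ u ∩ γ v) := card_biUnion_le
      _ ≤ #(C.erase u) * 1 :=
          sum_le_card_nsmul _ _ _ fun v hv ↦ hinter u hu v (mem_of_mem_erase hv)
            (ne_of_mem_erase hv).symm
      _ < #(γ u) := by rw [card_erase_of_mem hu, hγ u hu]; have := card_pos.2 ⟨u, hu⟩; omega
  obtain ⟨c, hcu, hc⟩ := exists_mem_notMem_of_card_lt_card hshared
  exact ⟨c, hcu, fun v hv hvu hcv ↦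
    hc (mem_inter.2 ⟨hcu, mem_biUnion.2 ⟨v, mem_erase.2 ⟨hvu, hv⟩, hcv⟩⟩)⟩

-- Inside an `H`-clique and for `r u v := H.Adj u v ∧ blue u v`, these are the red edges.
open Classical in
noncomputable def nonEdges (r : α → α → Prop) (D : Finset α) : Finset (Finset α) :=
  {e ∈ D.powersetCard 2 | ¬(e : Set α).Pairwise r}

theorem mem_nonEdges {r : α → α → Prop} {D e : Finset α} :
    e ∈ nonEdges r D ↔ (e ⊆ D ∧ #e = 2) ∧ ¬(e : Set α).Pairwise r := by
  classical
  simp only [nonEdges, mem_filter, mem_powersetCard]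

theorem card_le_add_card_nonEdges {r : α → α → Prop} {D : Finset α} {ω : ℕ}
    (hD : ∀ S ⊆ D, (S : Set α).Pairwise r → #S ≤ ω) : #D ≤ ω + #(nonEdges r D) := by
  classical
  obtain ⟨I, hI, hImax⟩ :=
    exists_max_image (D.powerset.filter fun S : Finset α ↦ (S : Set α).Pairwise r) card
      ⟨∅, mem_filter.2 ⟨empty_mem_powerset D, by simp⟩⟩
  obtain ⟨hID, hIr⟩ := by simpa only [mem_filter, mem_powerset] using hI
  -- by maximality of `I`
  have hspoil : ∀ x ∈ D \ I, ∃ w ∈ I, ¬({x, w} : Set α).Pairwise r := by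
    intro x hx
    obtain ⟨hxD, hxI⟩ := mem_sdiff.1 hx
    by_contra! h
    have hins : ((insert x I : Finset α) : Set α).Pairwise r := by
      rw [coe_insert, Set.pairwise_insert]
      exact ⟨hIr, fun w hw hxw ↦ Set.pairwise_pair.1 (h w hw) hxw⟩
    have := hImax _ (mem_filter.2 ⟨mem_powerset.2 (insert_subset hxD hID), hins⟩)
    rw [card_insert_of_notMem hxI] at this
    omega
  choose! w hwI hw using hspoil
  have hmaps : Set.MapsTo (fun x ↦ {x, w x}) ((D \ I : Finset α) : Set α)
      (nonEdges r D : Set (Finset α)) := by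
    intro x hx
    obtain ⟨hxD, hxI⟩ := mem_sdiff.1 hx
    have hxw : x ≠ w x := fun h ↦ hxI (h ▸ hwI x hx)
    refine mem_nonEdges.2 ⟨⟨?_, card_pair hxw⟩, by simpa using hw x hx⟩
    exact insert_subset hxD (singleton_subset_iff.2 (hID (hwI x hx)))
  have hinj : Set.InjOn (fun x ↦ ({x, w x} : Finset α)) ((D \ I : Finset α) : Set α) := by
    intro x hx y hy hxy
    have hxy' : x ∈ ({y, w y} : Finset α) := by simpa [hxy] using mem_insert_self x {w x}
    rcases mem_insert.1 hxy' with h | h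
    · exact h
    · exact absurd (mem_singleton.1 h ▸ hwI y hy) (mem_sdiff.1 hx).2
  have := card_le_card_of_injOn _ hmaps hinj
  have := card_sdiff_add_card_eq_card hID
  have := hD I hID hIr
  omega

theorem card_nonEdges_insert_le {r : α → α → Prop} {C R : Finset α} {x : α}
    (hR : ∀ u ∈ C, ¬(r x u ∧ r u x) → u ∈ R) :
    #(nonEdges r (insert x C)) ≤ #(nonEdges r C) + #R := by
  have hsub : nonEdges r (insert x C) ⊆ nonEdges r C ∪ R.image fun u ↦ {x, u} := by
    intro e he
    obtain ⟨⟨heC, hecard⟩, her⟩ := mem_nonEdges.1 he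
    by_cases hxe : x ∈ e
    · obtain ⟨u, hue⟩ : ∃ u, e = {x, u} := by
        obtain ⟨a, b, hab, rfl⟩ := card_eq_two.1 hecard
        rcases mem_insert.1 hxe with rfl | h
        · exact ⟨b, rfl⟩
        · exact ⟨a, by rw [mem_singleton.1 h, pair_comm]⟩
      subst hue
      have hxu : x ≠ u := fun h ↦ by simp [h] at hecard
      have huC : u ∈ C := by
        have := heC (mem_insert_of_mem (mem_singleton_self u))
        exact (mem_insert.1 this).resolve_left (Ne.symm hxu)
      refine mem_union_right _ (mem_image.2 ⟨u, hR u huC ?_, rfl⟩)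
      simpa [Set.pairwise_pair, hxu] using her
    · refine mem_union_left _ (mem_nonEdges.2 ⟨⟨?_, hecard⟩, her⟩)
      exact fun u hu ↦ (mem_insert.1 (heC hu)).resolve_left fun h ↦ hxe (h ▸ hu)
  grw [card_le_card hsub, card_union_le, card_image_le]

end Finset

namespace SimpleGraph

variable {V κ : Type*} [DecidableEq κ]

-- `card_filter_le_two` is not required of the final colouring: it is the invariant that leaves
-- enough unused colours for the next vertex (see `le_card_add_card_sdiff_biUnion`).
structure IsGoodColoring (H : SimpleGraph V) (blue : V → V → Prop) (t : ℕ) (P : Finset κ)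
    (γ : V → Finset κ) (W : Set V) : Prop where
  subset_palette : ∀ v ∈ W, γ v ⊆ P
  card_eq : ∀ v ∈ W, #(γ v) = t
  inter_eq_empty : ∀ u ∈ W, ∀ v ∈ W, H.Adj u v → blue u v → γ u ∩ γ v = ∅
  card_inter_eq_one : ∀ u ∈ W, ∀ v ∈ W, H.Adj u v → ¬blue u v → #(γ u ∩ γ v) = 1
  card_filter_le_two : ∀ S : Finset V, ↑S ⊆ W → H.IsClique (S : Set V) →
    ∀ c, #{v ∈ S | c ∈ γ v} ≤ 2

variable {H : SimpleGraph V} {blue : V → V → Prop} {t : ℕ} {P : Finset κ} {γ : V → Finset κ}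
  {W : Set V}

theorem isGoodColoring_empty (γ : V → Finset κ) : H.IsGoodColoring blue t P γ ∅ where
  subset_palette := by simp
  card_eq := by simp
  inter_eq_empty := by simp
  card_inter_eq_one := by simp
  card_filter_le_two S hS _ c := by simp [coe_eq_empty.1 (Set.subset_empty_iff.1 hS)]


theorem IsGoodColoring.card_inter_le_one (hγ : H.IsGoodColoring blue t P γ W) {u v : V}
    (hu : u ∈ W) (hv : v ∈ W) (huv : H.Adj u v) : #(γ u ∩ γ v) ≤ 1 := by
  by_cases hb : blue u v
  · simp [hγ.inter_eq_empty u hu v hv huv hb]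
  · exact (hγ.card_inter_eq_one u hu v hv huv hb).le

variable [DecidableEq V] {x : V} {C : Finset V} {s : Finset κ}

theorem IsGoodColoring.card_filter_update_le_two (hγ : H.IsGoodColoring blue t P γ W)
    (hC : ∀ u, u ∈ C ↔ u ∈ W ∧ H.Adj x u) (hmult : ∀ c ∈ s, #{u ∈ C | c ∈ γ u} ≤ 1)
    {S : Finset V} (hSW : ↑S ⊆ insert x W) (hS : H.IsClique (S : Set V)) (c : κ) :
    #{v ∈ S | c ∈ Function.update γ x s v} ≤ 2 := by
  have hS'W : ↑(S.erase x) ⊆ W := fun v hv ↦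
    (hSW (mem_of_mem_erase hv)).resolve_left (ne_of_mem_erase hv)
  have hS' : H.IsClique (S.erase x : Set V) := hS.subset (by simp)
  have hsub : {v ∈ S | c ∈ Function.update γ x s v} ⊆ insert x {v ∈ S.erase x | c ∈ γ v} := by
    intro v hv
    obtain ⟨hvS, hcv⟩ := mem_filter.1 hv
    by_cases hvx : v = x
    · exact hvx ▸ mem_insert_self v _
    · rw [Function.update_of_ne hvx] at hcv
      exact mem_insert_of_mem (mem_filter.2 ⟨mem_erase.2 ⟨hvx, hvS⟩, hcv⟩)
  by_cases hcx : c ∈ s ∧ x ∈ S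
  · have hS'C : {v ∈ S.erase x | c ∈ γ v} ⊆ {u ∈ C | c ∈ γ u} := by
      refine filter_subset_filter _ fun v hv ↦ (hC v).2 ⟨hS'W hv, ?_⟩
      exact hS (by simpa using hcx.2) (by simpa using mem_of_mem_erase hv) (ne_of_mem_erase hv).symm
    grw [card_le_card hsub, card_insert_le, card_le_card hS'C, hmult c hcx.1]
  · refine le_trans (card_le_card fun v hv ↦ ?_) (hγ.card_filter_le_two _ hS'W hS' c)
    rcases mem_insert.1 (hsub hv) with rfl | hv'
    · obtain ⟨hvS, hcv⟩ := mem_filter.1 hv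
      exact absurd ⟨by simpa using hcv, hvS⟩ hcx
    · exact hv'

theorem IsGoodColoring.update (hγ : H.IsGoodColoring blue t P γ W)
    (hsymm : ∀ u v, blue u v → blue v u) (hC : ∀ u, u ∈ C ↔ u ∈ W ∧ H.Adj x u)
    (hsP : s ⊆ P) (hs : #s = t) (hblue : ∀ u ∈ C, blue x u → s ∩ γ u = ∅)
    (hred : ∀ u ∈ C, ¬blue x u → #(s ∩ γ u) = 1) (hmult : ∀ c ∈ s, #{u ∈ C | c ∈ γ u} ≤ 1) :
    H.IsGoodColoring blue t P (Function.update γ x s) (insert x W) := by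
  have hW : ∀ v ∈ insert x W, x ≠ v → v ∈ W := fun v hv hxv ↦ hv.resolve_left hxv.symm
  have hCx : ∀ v ∈ insert x W, x ≠ v → H.Adj x v → v ∈ C := fun v hv hxv hadj ↦
    (hC v).2 ⟨hW v hv hxv, hadj⟩
  refine ⟨fun v hv ↦ ?_, fun v hv ↦ ?_, fun u hu v hv huv hb ↦ ?_, fun u hu v hv huv hb ↦ ?_,
    fun S hSW hS c ↦ hγ.card_filter_update_le_two hC hmult hSW hS c⟩
  · rcases eq_or_ne x v with rfl | hxv
    · simpa using hsP
    · simpa [hxv.symm] using hγ.subset_palette v (hW v hv hxv)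
  · rcases eq_or_ne x v with rfl | hxv
    · simpa using hs
    · simpa [hxv.symm] using hγ.card_eq v (hW v hv hxv)
  · rcases eq_or_ne x u with rfl | hxu <;> rcases eq_or_ne x v with rfl | hxv
    · exact absurd huv H.irrefl
    · simpa [hxv.symm] using hblue v (hCx v hv hxv huv) hb
    · simpa [hxu.symm, inter_comm] using hblue u (hCx u hu hxu huv.symm) (hsymm u x hb)
    · simpa [hxu.symm, hxv.symm] using
        hγ.inter_eq_empty u (hW u hu hxu) v (hW v hv hxv) huv hb
  · rcases eq_or_ne x u with rfl | hxu <;> rcases eq_or_ne x v with rfl | hxv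
    · exact absurd huv H.irrefl
    · simpa [hxv.symm] using hred v (hCx v hv hxv huv) hb
    · simpa [hxu.symm, inter_comm] using hred u (hCx u hu hxu huv.symm) (mt (hsymm x u) hb)
    · simpa [hxu.symm, hxv.symm] using
        hγ.card_inter_eq_one u (hW u hu hxu) v (hW v hv hxv) huv hb

theorem IsGoodColoring.le_card_add_card_sdiff_biUnion (hγ : H.IsGoodColoring blue t P γ W)
    (hsymm : ∀ u v, blue u v → blue v u) {ω : ℕ}
    (hω : ∀ S : Finset V, (S : Set V).Pairwise (fun u v ↦ H.Adj u v ∧ blue u v) → #S ≤ ω)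
    (hP : t ^ 2 + ω ≤ #P + 1) (hCW : ↑C ⊆ W) (hxC : ∀ u ∈ C, H.Adj x u)
    (hC : H.IsClique (C : Set V)) (hCt : #C ≤ t) {R : Finset V}
    (hR : ∀ u ∈ C, ¬blue x u → u ∈ R) : t ≤ #R + #(P \ C.biUnion γ) := by
  set r : V → V → Prop := fun u v ↦ H.Adj u v ∧ blue u v
  have hUP : C.biUnion γ ⊆ P := biUnion_subset.2 fun u hu ↦ hγ.subset_palette u (hCW hu)
  have hshared : #(C.biUnion γ) + #(nonEdges r C) ≤ #C * t := by
    refine (card_biUnion_add_card_le_sum_card (hγ.card_filter_le_two C hCW hC)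
      (fun e he ↦ mem_powersetCard.2 (mem_nonEdges.1 he).1) fun e he ↦ ?_).trans_eq
      (sum_const_nat fun u hu ↦ hγ.card_eq u (hCW hu))
    obtain ⟨⟨heC, he2⟩, her⟩ := mem_nonEdges.1 he
    obtain ⟨a, b, hab, rfl⟩ := card_eq_two.1 he2
    have ha : a ∈ C := heC (mem_insert_self a _)
    have hb : b ∈ C := heC (mem_insert_of_mem (mem_singleton_self b))
    have hadj : H.Adj a b := hC ha hb hab
    have hred : ¬blue a b := fun h ↦ her (by
      simpa [Set.pairwise_pair, r] using fun _ ↦ ⟨⟨hadj, h⟩, hadj.symm, hsymm a b h⟩)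
    obtain ⟨c, hc⟩ := card_eq_one.1 (hγ.card_inter_eq_one a (hCW ha) b (hCW hb) hadj hred)
    have hcab := mem_inter.1 (hc ▸ mem_singleton_self c)
    exact ⟨c, by simpa using hcab⟩
  have hxnotC : x ∉ C := fun h ↦ H.irrefl (hxC x h)
  have hclique : #(insert x C) ≤ ω + #(nonEdges r (insert x C)) :=
    card_le_add_card_nonEdges fun S _ hS ↦ hω S hS
  have hins : #(nonEdges r (insert x C)) ≤ #(nonEdges r C) + #R :=
    card_nonEdges_insert_le fun u hu h ↦
      hR u hu fun hb ↦ h ⟨⟨hxC u hu, hb⟩, (hxC u hu).symm, hsymm x u hb⟩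
  -- `(t - #C) * (t - 1) ≥ 0`
  have hkey : t + #C * t ≤ t ^ 2 + #C := by
    obtain ⟨d, hd⟩ := Nat.exists_eq_add_of_le hCt
    subst hd
    nlinarith [Nat.le_mul_self d]
  rw [card_insert_of_notMem hxnotC] at hclique
  have := card_sdiff_add_card_eq_card hUP
  omega

theorem IsGoodColoring.exists_insert (hγ : H.IsGoodColoring blue t P γ W)
    (hsymm : ∀ u v, blue u v → blue v u) {ω : ℕ}
    (hω : ∀ S : Finset V, (S : Set V).Pairwise (fun u v ↦ H.Adj u v ∧ blue u v) → #S ≤ ω)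
    (hP : t ^ 2 + ω ≤ #P + 1) (hC : ∀ u, u ∈ C ↔ u ∈ W ∧ H.Adj x u)
    (hCclique : H.IsClique (C : Set V)) (hCt : #C ≤ t) :
    ∃ γ' : V → Finset κ, H.IsGoodColoring blue t P γ' (insert x W) := by
  classical
  have hCW : ↑C ⊆ W := fun u hu ↦ ((hC u).1 hu).1
  have hxC : ∀ u ∈ C, H.Adj x u := fun u hu ↦ ((hC u).1 hu).2
  set R := {u ∈ C | ¬blue x u}
  have hpriv : ∀ u ∈ R, ∃ c ∈ γ u, ∀ v ∈ C, v ≠ u → c ∉ γ v := fun u hu ↦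
    exists_mem_forall_notMem_of_card_inter_le_one_s11 (fun v hv ↦ hγ.card_eq v (hCW hv)) hCt
      (fun v hv w hw hvw ↦ hγ.card_inter_le_one (hCW hv) (hCW hw) (hCclique hv hw hvw))
      (filter_subset _ _ hu)
  obtain ⟨s, hsP, hs, hred, hblue, hmult⟩ := exists_subset_card_inter_eq_one (filter_subset _ C)
    (biUnion_subset.2 fun u hu ↦ hγ.subset_palette u (hCW hu))
    ((card_filter_le _ _).trans hCt)
    (hγ.le_card_add_card_sdiff_biUnion hsymm hω hP hCW hxC hCclique hCt
      fun u hu hb ↦ mem_filter.2 ⟨hu, hb⟩)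
    hpriv
  exact ⟨_, hγ.update hsymm hC hsP hs (fun u hu hb ↦ hblue u hu fun h ↦ (mem_filter.1 h).2 hb)
    (fun u hu hb ↦ hred u (mem_filter.2 ⟨hu, hb⟩)) hmult⟩

theorem exists_isGoodColoring_univ {n : ℕ} {H : SimpleGraph (Fin n)}
    {blue : Fin n → Fin n → Prop} (hsymm : ∀ u v, blue u v → blue v u) {ω : ℕ}
    (hω : ∀ S : Finset (Fin n), (S : Set (Fin n)).Pairwise (fun u v ↦ H.Adj u v ∧ blue u v) →
      #S ≤ ω)
    (hP : t ^ 2 + ω ≤ #P + 1) (hclique : ∀ i, H.IsClique {j | j < i ∧ H.Adj i j})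
    (hcard : ∀ i, {j | j < i ∧ H.Adj i j}.ncard ≤ t) :
    ∃ γ : Fin n → Finset κ, H.IsGoodColoring blue t P γ Set.univ := by
  classical
  suffices h : ∀ k ≤ n, ∃ γ : Fin n → Finset κ, H.IsGoodColoring blue t P γ {v | (v : ℕ) < k} by
    simpa using h n le_rfl
  intro k hk
  induction k with
  | zero => simpa using ⟨fun _ ↦ ∅, isGoodColoring_empty _⟩
  | succ k ih =>
    obtain ⟨γ, hγ⟩ := ih (by omega)
    set x : Fin n := ⟨k, hk⟩
    have hinsert : insert x {v : Fin n | (v : ℕ) < k} = {v : Fin n | (v : ℕ) < k + 1} := by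
      ext v
      simp only [Set.mem_insert_iff, Fin.ext_iff, Set.mem_ofPred_eq, Order.lt_add_one_iff, x]
      omega
    have hC : ∀ u, u ∈ ({j | j < x ∧ H.Adj x j} : Finset (Fin n)) ↔
        u ∈ {v : Fin n | (v : ℕ) < k} ∧ H.Adj x u := by
      simp [x, Fin.lt_def]
    rw [← hinsert]
    refine hγ.exists_insert hsymm hω hP hC (by simpa using hclique x) ?_
    simpa [← Set.ncard_coe_finset] using hcard x

end SimpleGraph

theorem IsTTree.isClique_backNbhd {t n : ℕ} {H : SimpleGraph (Fin n)} (hH : IsTTree t n H)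
    (i : Fin n) : H.IsClique {j | j < i ∧ H.Adj i j} := by
  by_cases hi : t ≤ (i : ℕ)
  · exact (hH.2.2 i hi).1
  · exact fun a ha b hb hab ↦ hH.2.1 a b (by have := ha.1; omega) (by have := hb.1; omega) hab

theorem IsTTree.ncard_backNbhd_le {t n : ℕ} {H : SimpleGraph (Fin n)} (hH : IsTTree t n H)
    (i : Fin n) : {j | j < i ∧ H.Adj i j}.ncard ≤ t := by
  by_cases hi : t ≤ (i : ℕ)
  · exact (hH.2.2 i hi).2.le
  · calc {j | j < i ∧ H.Adj i j}.ncard ≤ (Set.Iio i).ncard :=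
          Set.ncard_le_ncard (fun j hj ↦ hj.1) (Set.toFinite _)
      _ = i := by rw [← Finset.coe_Iio, Set.ncard_coe_finset, Fin.card_Iio]
      _ ≤ t := by omega

theorem coloring_strategy_on_ttree_general (t ω n : ℕ)
    (H : SimpleGraph (Fin n)) (hH : IsTTree t n H)
    (blue : Fin n → Fin n → Prop) (hsymm : ∀ u v, blue u v → blue v u)
    (hnoblue : ¬∃ S : Finset (Fin n), S.card = ω + 1 ∧
        (S : Set (Fin n)).Pairwise (fun u v => H.Adj u v ∧ blue u v)) :
    ∃ γ : Fin n → Finset ℕ,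
      (∀ v, γ v ⊆ Finset.Icc 1 (t ^ 2 + ω - 1)) ∧
      (∀ v, (γ v).card = t) ∧
      (∀ u v : Fin n, H.Adj u v → blue u v → γ u ∩ γ v = ∅) ∧
      (∀ u v : Fin n, H.Adj u v → ¬blue u v → (γ u ∩ γ v).card = 1) := by
  have hω : ∀ S : Finset (Fin n), (S : Set (Fin n)).Pairwise (fun u v ↦ H.Adj u v ∧ blue u v) →
      #S ≤ ω := by
    intro S hS
    by_contra! hSω
    obtain ⟨T, hTS, hT⟩ := exists_subset_card_eq (Nat.succ_le_of_lt hSω)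
    exact hnoblue ⟨T, hT, hS.mono (coe_subset.2 hTS)⟩
  obtain ⟨γ, hγ⟩ := SimpleGraph.exists_isGoodColoring_univ (P := Finset.Icc 1 (t ^ 2 + ω - 1))
    hsymm hω (by rw [Nat.card_Icc]; omega) hH.isClique_backNbhd hH.ncard_backNbhd_le
  exact ⟨γ, fun v ↦ hγ.subset_palette v trivial, fun v ↦ hγ.card_eq v trivial,
    fun u v ↦ hγ.inter_eq_empty u trivial v trivial,
    fun u v ↦ hγ.card_inter_eq_one u trivial v trivial⟩

/-- Let `H` be a `t`-tree whose initial clique consists of the first `t`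
vertices, with a red-blue edge-coloring (`blue u v` meaning the edge `uv` is blue, red
otherwise) in which every edge of the initial clique is red and there is no blue clique on
`ω + 1` vertices (`2 ≤ ω ≤ t`). Then there is an assignment of exactly `t` colors from
`{1, …, t² + ω - 1}` to each vertex, disjoint across blue edges and sharing exactly one
color across red edges. -/
theorem coloring_strategy_on_ttree (t ω n : ℕ) (ht : 1 ≤ t) (hω2 : 2 ≤ ω) (hωt : ω ≤ t)
    (H : SimpleGraph (Fin n)) (hH : IsTTree t n H)
    (blue : Fin n → Fin n → Prop) (hsymm : ∀ u v, blue u v → blue v u)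
    (hinit : ∀ i j : Fin n, (i : ℕ) < t → (j : ℕ) < t → i ≠ j → ¬blue i j)
    (hnoblue : ¬∃ S : Finset (Fin n), S.card = ω + 1 ∧
        (S : Set (Fin n)).Pairwise (fun u v => H.Adj u v ∧ blue u v)) :
    ∃ γ : Fin n → Finset ℕ,
      (∀ v, γ v ⊆ Finset.Icc 1 (t ^ 2 + ω - 1)) ∧
      (∀ v, (γ v).card = t) ∧
      (∀ u v : Fin n, H.Adj u v → blue u v → γ u ∩ γ v = ∅) ∧
      (∀ u v : Fin n, H.Adj u v → ¬blue u v → (γ u ∩ γ v).card = 1) :=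
  coloring_strategy_on_ttree_general t ω n H hH blue hsymm hnoblue
end
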